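/- arXiv:1609.07565 — 5 statements merged into one kernel-verified Lean document; each statement's English description precedes it below -/
import Mathlib

section
/- Let m be a positive integer such that m+1 is not a power of 2, and set e = e(m). Then for every integer s ≥ r(m), one has zcl_s(m) = s·m - (2^e - 1). -/
open Finset

/-- `eVal m` = `e(m)`, the 2-adic valuation of `m + 1`. -/
def eVal (m : ℕ) : ℕ := padicValNat 2 (m + 1)

/-- `d0Val m` = `d_0 = 2 ^ k - m - 1`, where `k = Nat.size m` is the least integer
(positive, for `m ≥ 1`) with `2 ^ k > m`. -/
def d0Val (m : ℕ) : ℕ := 2 ^ Nat.size m - m - 1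

/-- `dVal m ℓ` = `d_ℓ = d_0 - 2 ^ e · ℓ`. -/
def dVal (m ℓ : ℕ) : ℕ := d0Val m - 2 ^ eVal m * ℓ

/-- `tVal m` = `t = d_0 / 2 ^ e - 1`. -/
def tVal (m : ℕ) : ℕ := d0Val m / 2 ^ eVal m - 1

/-- One step of the `r`-recursion, given the partial sum
`S = d_0·r_0 + ⋯ + d_{ℓ-1}·r_{ℓ-1}`: the value is
`⌊(m - (2^e - 1) - S) / d_ℓ⌋` if `C(m + d_ℓ, d_ℓ)` is odd, and `0` otherwise. -/
def rStep (m ℓ S : ℕ) : ℕ :=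
  if (m + dVal m ℓ).choose (dVal m ℓ) % 2 = 1 then
    (m - (2 ^ eVal m - 1) - S) / dVal m ℓ
  else 0

/-- `partialS m ℓ = d_0·r_0 + ⋯ + d_{ℓ-1}·r_{ℓ-1}`. -/
def partialS (m : ℕ) : ℕ → ℕ
  | 0 => 0
  | ℓ + 1 => partialS m ℓ + dVal m ℓ * rStep m ℓ (partialS m ℓ)

/-- `rVal m ℓ` is `r_ℓ` in the `r`-recursion. -/
def rVal (m ℓ : ℕ) : ℕ := rStep m ℓ (partialS m ℓ)

/-- `rOf m = r(m) = 1 + r_0 + r_1 + ⋯ + r_t`. -/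
def rOf (m : ℕ) : ℕ := 1 + ∑ ℓ ∈ Finset.range (tVal m + 1), rVal m ℓ

/-- The ideal `(x_1^{m+1}, …, x_s^{m+1})` of `(ℤ/2)[x_1, …, x_s]`. -/
noncomputable def projIdeal (m s : ℕ) : Ideal (MvPolynomial (Fin s) (ZMod 2)) :=
  Ideal.span (Set.range fun i : Fin s =>
    (MvPolynomial.X i : MvPolynomial (Fin s) (ZMod 2)) ^ (m + 1))

/-- `R(m,s) = (ℤ/2)[x_1, …, x_s]/(x_1^{m+1}, …, x_s^{m+1})`,
the mod 2 cohomology ring of `(ℝP^m)^s`. -/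
abbrev ProjRing (m s : ℕ) := MvPolynomial (Fin s) (ZMod 2) ⧸ projIdeal m s

/-- `(ℤ/2)[x]/(x^{m+1})`, the mod 2 cohomology ring of `ℝP^m`. -/
abbrev DiagRing (m : ℕ) :=
  Polynomial (ZMod 2) ⧸ Ideal.span {(Polynomial.X : Polynomial (ZMod 2)) ^ (m + 1)}

/-- `μ(m,s) : R(m,s) → (ℤ/2)[x]/(x^{m+1})`, the `ℤ/2`-algebra map sending each
`x_i` to `x` (induced by the `s`-fold diagonal of `ℝP^m`). -/
noncomputable def muHom (m s : ℕ) : ProjRing m s →ₐ[ZMod 2] DiagRing m :=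
  Ideal.Quotient.liftₐ (projIdeal m s)
    ((Ideal.Quotient.mkₐ (ZMod 2)
        (Ideal.span {(Polynomial.X : Polynomial (ZMod 2)) ^ (m + 1)})).comp
      (MvPolynomial.aeval fun _ : Fin s => (Polynomial.X : Polynomial (ZMod 2))))
    (by
      intro a ha
      have h : projIdeal m s ≤ RingHom.ker
          (((Ideal.Quotient.mkₐ (ZMod 2)
              (Ideal.span {(Polynomial.X : Polynomial (ZMod 2)) ^ (m + 1)})).comp
            (MvPolynomial.aeval fun _ : Fin s => (Polynomial.X : Polynomial (ZMod 2)))) :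
          MvPolynomial (Fin s) (ZMod 2) →ₐ[ZMod 2] DiagRing m).toRingHom := by
        rw [projIdeal, Ideal.span_le]
        rintro p ⟨i, rfl⟩
        simp only [SetLike.mem_coe, RingHom.mem_ker, AlgHom.toRingHom_eq_coe, RingHom.coe_coe,
          AlgHom.comp_apply, map_pow, MvPolynomial.aeval_X, Ideal.Quotient.mkₐ_eq_mk]
        rw [← map_pow, Ideal.Quotient.eq_zero_iff_mem]
        exact Ideal.subset_span rfl
      exact h ha)

/-- `zclVal m s` : the `s`-th zero-divisor cup-length of `ℝP^m` with mod 2 coefficients,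
i.e. the largest `N` such that some `N` elements of `ker μ(m,s)` have a nonzero
product in `R(m,s)`. -/
noncomputable def zclVal (m s : ℕ) : ℕ :=
  sSup {N | ∃ f : Fin N → ProjRing m s,
    (∀ i, muHom m s (f i) = 0) ∧ ∏ i, f i ≠ 0}



private lemma lucas2 (n k : ℕ) :
    Nat.choose n k % 2 = (Nat.choose (n % 2) (k % 2) * Nat.choose (n / 2) (k / 2)) % 2 := by
  haveI : Fact (Nat.Prime 2) := ⟨Nat.prime_two⟩
  exact Choose.choose_modEq_choose_mod_mul_choose_div_nat (p := 2)

/-- Fact A: if the low `e` bits of `m` are all 1, `u ≤ m` and `C(m-u+b, b)` is odd,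
then `b % 2^e ≤ u`. -/
private lemma factA : ∀ e m u b : ℕ, m % 2 ^ e = 2 ^ e - 1 → u ≤ m →
    (m - u + b).choose b % 2 = 1 → b % 2 ^ e ≤ u := by
  intro e
  induction e with
  | zero => intro m u b _ _ _; simp [Nat.mod_one]
  | succ e ih =>
    intro m u b hm hu hodd
    have hE : 0 < 2 ^ e := Nat.pow_pos (by norm_num)
    have hpow : (2 : ℕ) ^ (e + 1) = 2 * 2 ^ e := by ring
    rw [hpow] at hm ⊢
    have hm2 : m % 2 = 1 := by
      have := Nat.mod_mod_of_dvd m (⟨2 ^ e, rfl⟩ : 2 ∣ 2 * 2 ^ e)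
      omega
    have hMdiv : m % (2 * 2 ^ e) / 2 = m / 2 % 2 ^ e := Nat.mod_mul_right_div_self m 2 (2 ^ e)
    have hM : m / 2 % 2 ^ e = 2 ^ e - 1 := by omega
    have hbdiv : b % (2 * 2 ^ e) / 2 = b / 2 % 2 ^ e := Nat.mod_mul_right_div_self b 2 (2 ^ e)
    have hbmod : b % (2 * 2 ^ e) % 2 = b % 2 := Nat.mod_mod_of_dvd b ⟨2 ^ e, rfl⟩
    rw [lucas2] at hodd
    rcases Nat.even_or_odd u with hue | huo
    · have hue' : u % 2 = 0 := Nat.even_iff.mp hue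
      have ha2 : (m - u) % 2 = 1 := by omega
      rcases Nat.even_or_odd b with hbe | hbo
      · have hbe' : b % 2 = 0 := Nat.even_iff.mp hbe
        have h1 : (m - u + b) % 2 = 1 := by omega
        rw [h1, hbe'] at hodd
        have h2 : (m - u + b) / 2 = m / 2 - u / 2 + b / 2 := by omega
        rw [h2] at hodd
        simp only [Nat.choose_one_right, Nat.choose_zero_right, one_mul] at hodd
        have := ih (m / 2) (u / 2) (b / 2) hM (by omega) hodd
        omega
      · have hbo' : b % 2 = 1 := Nat.odd_iff.mp hbo
        have h1 : (m - u + b) % 2 = 0 := by omega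
        rw [h1, hbo'] at hodd
        simp at hodd
    · have huo' : u % 2 = 1 := Nat.odd_iff.mp huo
      have ha2 : (m - u) % 2 = 0 := by omega
      rcases Nat.even_or_odd b with hbe | hbo
      · have hbe' : b % 2 = 0 := Nat.even_iff.mp hbe
        have h1 : (m - u + b) % 2 = 0 := by omega
        rw [h1, hbe'] at hodd
        have h2 : (m - u + b) / 2 = m / 2 - u / 2 + b / 2 := by omega
        rw [h2] at hodd
        simp only [Nat.choose_zero_right, one_mul] at hodd
        have := ih (m / 2) (u / 2) (b / 2) hM (by omega) hodd
        omega
      · have hbo' : b % 2 = 1 := Nat.odd_iff.mp hbo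
        have h1 : (m - u + b) % 2 = 1 := by omega
        rw [h1, hbo'] at hodd
        have h2 : (m - u + b) / 2 = m / 2 - u / 2 + b / 2 := by omega
        rw [h2] at hodd
        simp only [Nat.choose_self, one_mul] at hodd
        have := ih (m / 2) (u / 2) (b / 2) hM (by omega) hodd
        omega

/-- Fact B: if `m % 2^(e+1) = 2^e - 1` then `C(m + 2^e, 2^e)` is odd. -/
private lemma factB : ∀ e m : ℕ, m % 2 ^ (e + 1) = 2 ^ e - 1 →
    (m + 2 ^ e).choose (2 ^ e) % 2 = 1 := by
  intro e
  induction e with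
  | zero =>
    intro m hm
    simp only [pow_zero, pow_one] at hm ⊢
    rw [Nat.choose_one_right]
    omega
  | succ e ih =>
    intro m hm
    have hE : 0 < 2 ^ e := Nat.pow_pos (by norm_num)
    have hp1 : (2 : ℕ) ^ (e + 1) = 2 * 2 ^ e := by ring
    have hp2 : (2 : ℕ) ^ (e + 2) = 2 * 2 ^ (e + 1) := by ring
    rw [hp1] at hm ⊢
    rw [hp2, hp1] at hm
    have hm2 : m % 2 = 1 := by
      have := Nat.mod_mod_of_dvd m (⟨2 * 2 ^ e, by ring⟩ : 2 ∣ 2 * (2 * 2 ^ e))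
      omega
    have hMdiv : m % (2 * (2 * 2 ^ e)) / 2 = m / 2 % (2 * 2 ^ e) :=
      Nat.mod_mul_right_div_self m 2 (2 * 2 ^ e)
    have hM : m / 2 % (2 * 2 ^ e) = 2 ^ e - 1 := by omega
    rw [lucas2]
    have h1 : (m + 2 * 2 ^ e) % 2 = 1 := by omega
    have h2 : (2 * 2 ^ e) % 2 = 0 := by omega
    have h3 : (m + 2 * 2 ^ e) / 2 = m / 2 + 2 ^ e := by omega
    have h4 : (2 * 2 ^ e) / 2 = 2 ^ e := by omega
    rw [h1, h2, h3, h4]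
    simp only [Nat.choose_one_right, Nat.choose_zero_right, one_mul]
    have := ih (m / 2) (by rw [hp1]; exact hM)
    omega


private lemma key_comb {m e : ℕ} (hEm : m % 2 ^ e = 2 ^ e - 1) (hdvd : 2 ^ e ∣ m + 1)
    {ι : Type*} (t : Finset ι) (γ b : ι → ℕ)
    (hγ : ∀ i ∈ t, γ i ≤ m)
    (hodd : ∀ i ∈ t, (γ i + b i).choose (b i) % 2 = 1)
    (hb : ∑ i ∈ t, b i ≤ m) :
    ∑ i ∈ t, (γ i + b i) + 2 ^ e ≤ t.card * m + m + 1 := by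
  have hE : 0 < 2 ^ e := Nat.pow_pos (by norm_num)
  have hstep : ∀ i ∈ t, b i % 2 ^ e ≤ m - γ i := by
    intro i hi
    refine factA e m (m - γ i) (b i) hEm (by omega) ?_
    have h1 : m - (m - γ i) = γ i := by have := hγ i hi; omega
    rw [h1]; exact hodd i hi
  set β : ι → ℕ := fun i => 2 ^ e * (b i / 2 ^ e) with hβdef
  have hβle : ∀ i, β i ≤ b i := by
    intro i
    have := Nat.div_add_mod (b i) (2 ^ e)
    simp only [hβdef]
    omega
  have hbub : ∀ i ∈ t, b i ≤ (m - γ i) + β i := by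
    intro i hi
    have h1 := Nat.div_add_mod (b i) (2 ^ e)
    have h2 := hstep i hi
    simp only [hβdef]
    omega
  have hsumβ : ∑ i ∈ t, β i ≤ m := le_trans (Finset.sum_le_sum fun i _ => hβle i) hb
  have hdvdS : 2 ^ e ∣ ∑ i ∈ t, β i := Finset.dvd_sum fun i _ => Dvd.intro _ rfl
  have hSb : ∑ i ∈ t, β i + 2 ^ e ≤ m + 1 := by
    have h1 : 2 ^ e ∣ (m + 1) - ∑ i ∈ t, β i := Nat.dvd_sub hdvd hdvdS
    have h2 : 2 ^ e ≤ (m + 1) - ∑ i ∈ t, β i := Nat.le_of_dvd (by omega) h1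
    omega
  have h1 : ∑ i ∈ t, (γ i + b i) ≤ ∑ i ∈ t, (m + β i) :=
    Finset.sum_le_sum fun i hi => by have := hbub i hi; have := hγ i hi; omega
  have h2 : ∑ i ∈ t, (m + β i) = t.card * m + ∑ i ∈ t, β i := by
    rw [Finset.sum_add_distrib, Finset.sum_const, smul_eq_mul]
  omega



section Rec

variable {m : ℕ} (hm : 1 ≤ m) (hpow : ¬ ∃ k, m + 1 = 2 ^ k)
include hm hpow

private lemma hdvd_e : 2 ^ eVal m ∣ m + 1 := pow_padicValNat_dvd

private lemma hmod_e1 : m % 2 ^ (eVal m + 1) = 2 ^ eVal m - 1 ∧ 3 * 2 ^ eVal m ≤ m + 1 := by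
  haveI : Fact (Nat.Prime 2) := ⟨Nat.prime_two⟩
  obtain ⟨c, hc⟩ := hdvd_e hm hpow
  set e := eVal m with he
  have hE : 0 < 2 ^ e := Nat.pow_pos (by norm_num)
  have hnd : ¬ 2 ^ (e + 1) ∣ m + 1 := pow_succ_padicValNat_not_dvd (by omega)
  have hcodd : c % 2 = 1 := by
    rcases Nat.even_or_odd c with hce | hco
    · exfalso; obtain ⟨c', rfl⟩ := hce
      exact hnd ⟨c', by rw [hc]; ring⟩
    · exact Nat.odd_iff.mp hco
  have hc1 : c ≠ 1 := by
    intro h; exact hpow ⟨e, by rw [hc, h, mul_one]⟩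
  have hc3 : 3 ≤ c := by omega
  constructor
  · obtain ⟨c', hc'⟩ : ∃ c', c = 2 * c' + 1 := ⟨c / 2, by omega⟩
    have hmeq : m = 2 ^ (e + 1) * c' + (2 ^ e - 1) := by
      have h1 : (2:ℕ) ^ (e + 1) = 2 * 2 ^ e := by ring
      rw [h1]
      have h2 : m + 1 = 2 * 2 ^ e * c' + 2 ^ e := by rw [hc, hc']; ring
      omega
    rw [hmeq, Nat.mul_add_mod]
    have hlt : 2 ^ e - 1 < 2 ^ (e + 1) := by
      have : (2:ℕ)^(e + 1) = 2 * 2^e := by ring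
      omega
    exact Nat.mod_eq_of_lt hlt
  · calc 3 * 2 ^ e ≤ c * 2 ^ e := Nat.mul_le_mul_right _ hc3
    _ = m + 1 := by rw [hc]; ring

-- basic consequences
private lemma hmod_e : m % 2 ^ eVal m = 2 ^ eVal m - 1 := by
  obtain ⟨h1, _⟩ := hmod_e1 hm hpow
  have h2 := Nat.mod_mod_of_dvd m (⟨2, by ring⟩ : 2 ^ eVal m ∣ 2 ^ (eVal m + 1))
  have hE : 0 < 2 ^ eVal m := Nat.pow_pos (by norm_num)
  rw [h1] at h2
  rw [← h2, Nat.mod_eq_of_lt (by omega)]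

private lemma h2e_le : 2 ^ eVal m ≤ m := by
  obtain ⟨_, h⟩ := hmod_e1 hm hpow
  have hE : 0 < 2 ^ eVal m := Nat.pow_pos (by norm_num)
  omega

private lemma hd0_pos : 0 < d0Val m := by
  have h1 : m < 2 ^ Nat.size m := Nat.lt_size_self m
  have h2 : m + 1 ≠ 2 ^ Nat.size m := fun h => hpow ⟨_, h⟩
  unfold d0Val; omega

private lemma hd0_dvd : 2 ^ eVal m ∣ d0Val m := by
  have h1 : 2 ^ eVal m ∣ m + 1 := hdvd_e hm hpow
  have h3 : 2 ^ eVal m ≤ m + 1 := Nat.le_of_dvd (by omega) h1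
  have h4 : m < 2 ^ Nat.size m := Nat.lt_size_self m
  have h2 : eVal m ≤ Nat.size m := by
    by_contra h
    push_neg at h
    have h5 : 2 ^ Nat.size m < 2 ^ eVal m := Nat.pow_lt_pow_right (by norm_num) h
    omega
  have heq : d0Val m = 2 ^ Nat.size m - (m + 1) := by
    unfold d0Val
    omega
  rw [heq]
  exact Nat.dvd_sub (pow_dvd_pow 2 h2) h1

private lemma hdvd_dVal (ℓ : ℕ) : 2 ^ eVal m ∣ dVal m ℓ :=
  Nat.dvd_sub (hd0_dvd hm hpow) (Dvd.intro ℓ rfl)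

private lemma hdt : dVal m (tVal m) = 2 ^ eVal m := by
  obtain ⟨z, hz⟩ := hd0_dvd hm hpow
  have hE : 0 < 2 ^ eVal m := Nat.pow_pos (by norm_num)
  have hzpos : 1 ≤ z := by
    have := hd0_pos hm hpow
    rcases Nat.eq_zero_or_pos z with h | h
    · rw [h, mul_zero] at hz; omega
    · exact h
  have ht : tVal m = z - 1 := by
    unfold tVal; rw [hz, Nat.mul_div_cancel_left _ hE]
  unfold dVal
  rw [ht, hz, ← Nat.mul_sub]
  have hz1 : z - (z - 1) = 1 := by omega
  rw [hz1, mul_one]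

-- invariant
private lemma partialS_inv (ℓ : ℕ) : 2 ^ eVal m ∣ partialS m ℓ ∧
    partialS m ℓ ≤ m - (2 ^ eVal m - 1) := by
  induction ℓ with
  | zero =>
    have h0 : partialS m 0 = 0 := rfl
    exact ⟨by rw [h0]; exact dvd_zero _, by rw [h0]; omega⟩
  | succ ℓ ih =>
    obtain ⟨ihd, ihle⟩ := ih
    constructor
    · exact dvd_add ihd ((hdvd_dVal hm hpow ℓ).mul_right _)
    · show partialS m ℓ + dVal m ℓ * rStep m ℓ (partialS m ℓ) ≤ _
      unfold rStep
      split
      · have h1 : dVal m ℓ * ((m - (2 ^ eVal m - 1) - partialS m ℓ) / dVal m ℓ)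
            ≤ m - (2 ^ eVal m - 1) - partialS m ℓ := Nat.mul_div_le _ _
        omega
      · simpa using ihle

private lemma partialS_final : partialS m (tVal m + 1) = m - (2 ^ eVal m - 1) := by
  have hE : 0 < 2 ^ eVal m := Nat.pow_pos (by norm_num)
  obtain ⟨hSd, hSle⟩ := partialS_inv hm hpow (tVal m)
  have hMd : 2 ^ eVal m ∣ m - (2 ^ eVal m - 1) := by
    have h1 : m - (2 ^ eVal m - 1) = (m + 1) - 2 ^ eVal m := by
      have := h2e_le hm hpow; omega
    rw [h1]
    exact Nat.dvd_sub (hdvd_e hm hpow) dvd_rfl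
  have hcond : (m + dVal m (tVal m)).choose (dVal m (tVal m)) % 2 = 1 := by
    rw [hdt hm hpow]
    exact factB (eVal m) m (hmod_e1 hm hpow).1
  show partialS m (tVal m) + dVal m (tVal m) * rStep m (tVal m) (partialS m (tVal m)) = _
  rw [rStep, if_pos hcond, hdt hm hpow]
  have hdiff : 2 ^ eVal m ∣ m - (2 ^ eVal m - 1) - partialS m (tVal m) :=
    Nat.dvd_sub hMd hSd
  rw [Nat.mul_div_cancel' hdiff]
  omega

private lemma sum_d_r : ∑ ℓ ∈ Finset.range (tVal m + 1), dVal m ℓ * rVal m ℓ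
    = m - (2 ^ eVal m - 1) := by
  rw [← partialS_final hm hpow]
  generalize tVal m + 1 = n
  induction n with
  | zero => simp [partialS]
  | succ n ih => rw [Finset.sum_range_succ, ih]; rfl

end Rec


private lemma flatMap_range_sum (F : ℕ → List ℕ) (n : ℕ) :
    ((List.range n).flatMap F).sum = ∑ ℓ ∈ Finset.range n, (F ℓ).sum := by
  induction n with
  | zero => simp
  | succ n ih =>
    rw [List.range_succ, List.flatMap_append, List.sum_append, ih, Finset.sum_range_succ]
    simp

private lemma flatMap_range_len (F : ℕ → List ℕ) (n : ℕ) :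
    ((List.range n).flatMap F).length = ∑ ℓ ∈ Finset.range n, (F ℓ).length := by
  induction n with
  | zero => simp
  | succ n ih =>
    rw [List.range_succ, List.flatMap_append, List.length_append, ih, Finset.sum_range_succ]
    simp

private lemma sum_getD : ∀ (L : List ℕ) (n : ℕ), L.length ≤ n →
    ∑ i ∈ Finset.range n, L.getD i 0 = L.sum := by
  intro L
  induction L with
  | nil =>
    intro n _
    simp
  | cons x L ih =>
    intro n hn
    simp only [List.length_cons] at hn
    obtain ⟨n', rfl⟩ : ∃ n', n = n' + 1 := ⟨n - 1, by omega⟩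
    rw [Finset.sum_range_succ']
    simp only [List.getD_cons_succ, List.getD_cons_zero]
    rw [ih n' (by omega), List.sum_cons]
    omega

namespace ZclAux

open MvPolynomial

variable (m q : ℕ)

/-- The ideal generated by the differences `X i - X (last)` (= sums, char 2). -/
noncomputable def Jid : Ideal (MvPolynomial (Fin (q + 1)) (ZMod 2)) :=
  Ideal.span (Set.range fun i : Fin (q + 1) =>
    (X i + X (Fin.last q) : MvPolynomial (Fin (q + 1)) (ZMod 2)))

lemma mu_mk (p : MvPolynomial (Fin (q + 1)) (ZMod 2)) :
    muHom m (q + 1) (Ideal.Quotient.mk (projIdeal m (q + 1)) p) =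
      Ideal.Quotient.mk _ ((aeval fun _ : Fin (q + 1) =>
        (Polynomial.X : Polynomial (ZMod 2))) p) := by
  exact (Ideal.Quotient.liftₐ_apply _ _ _ _).trans (Ideal.Quotient.lift_mk _ _ _)

lemma sub_diag_mem (p : MvPolynomial (Fin (q + 1)) (ZMod 2)) :
    p - (aeval fun _ : Fin (q + 1) =>
        (X (Fin.last q) : MvPolynomial (Fin (q + 1)) (ZMod 2))) p ∈ Jid q := by
  induction p using MvPolynomial.induction_on with
  | C a => simp [aeval_C]
  | add p1 p2 h1 h2 =>
    rw [map_add]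
    have : p1 + p2 - ((aeval fun _ => X (Fin.last q)) p1 + (aeval fun _ => X (Fin.last q)) p2)
        = (p1 - (aeval fun _ => X (Fin.last q)) p1) + (p2 - (aeval fun _ => X (Fin.last q)) p2) := by
      ring
    rw [this]
    exact Ideal.add_mem _ h1 h2
  | mul_X p i h =>
    rw [map_mul, aeval_X]
    have : p * X i - (aeval fun _ => X (Fin.last q)) p * X (Fin.last q)
        = (p - (aeval fun _ => X (Fin.last q)) p) * X i
          + (aeval fun _ => X (Fin.last q)) p * (X i - X (Fin.last q)) := by
      ring
    rw [this]
    refine Ideal.add_mem _ (Ideal.mul_mem_right _ _ h) (Ideal.mul_mem_left _ _ ?_)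
    have h2 : (X i - X (Fin.last q) : MvPolynomial (Fin (q + 1)) (ZMod 2))
        = X i + X (Fin.last q) := by
      rw [sub_eq_add_neg, CharTwo.neg_eq]
    rw [h2]
    exact Ideal.subset_span ⟨i, rfl⟩

lemma ker_mu_mem {p : MvPolynomial (Fin (q + 1)) (ZMod 2)}
    (hp : muHom m (q + 1) (Ideal.Quotient.mk (projIdeal m (q + 1)) p) = 0) :
    p ∈ Jid q ⊔ projIdeal m (q + 1) := by
  have h1 := sub_diag_mem q p
  have hq0 : (aeval fun _ : Fin (q + 1) => (Polynomial.X : Polynomial (ZMod 2))) p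
      ∈ Ideal.span {(Polynomial.X : Polynomial (ZMod 2)) ^ (m + 1)} := by
    rw [mu_mk] at hp
    exact Ideal.Quotient.eq_zero_iff_mem.mp hp
  rw [Ideal.mem_span_singleton] at hq0
  obtain ⟨h, hh⟩ := hq0
  have hcomp : (aeval fun _ : Fin (q + 1) =>
      (X (Fin.last q) : MvPolynomial (Fin (q + 1)) (ZMod 2))) p
      = Polynomial.aeval (X (Fin.last q) : MvPolynomial (Fin (q + 1)) (ZMod 2))
          ((aeval fun _ : Fin (q + 1) => (Polynomial.X : Polynomial (ZMod 2))) p) := by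
    have : (Polynomial.aeval (X (Fin.last q) : MvPolynomial (Fin (q + 1)) (ZMod 2))).comp
        (aeval fun _ : Fin (q + 1) => (Polynomial.X : Polynomial (ZMod 2)))
        = aeval fun _ : Fin (q + 1) =>
            (X (Fin.last q) : MvPolynomial (Fin (q + 1)) (ZMod 2)) := by
      apply MvPolynomial.algHom_ext
      intro i
      simp
    exact (DFunLike.congr_fun this p).symm
  have hσ : (aeval fun _ : Fin (q + 1) =>
      (X (Fin.last q) : MvPolynomial (Fin (q + 1)) (ZMod 2))) p ∈ projIdeal m (q + 1) := by
    rw [hcomp, hh, map_mul, map_pow, Polynomial.aeval_X]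
    have hX : (X (Fin.last q) : MvPolynomial (Fin (q + 1)) (ZMod 2)) ^ (m + 1)
        ∈ projIdeal m (q + 1) := Ideal.subset_span ⟨Fin.last q, rfl⟩
    exact Ideal.mul_mem_right _ _ hX
  have : p = (p - (aeval fun _ => X (Fin.last q)) p) + (aeval fun _ => X (Fin.last q)) p := by
    ring
  rw [this]
  exact Ideal.add_mem _ (Ideal.mem_sup_left h1) (Ideal.mem_sup_right hσ)


/-- Expansion of one factor as a sum of monomials. -/
lemma factor_expand (w : Fin (q + 1)) (n : ℕ) :
    (X w + X (Fin.last q) : MvPolynomial (Fin (q + 1)) (ZMod 2)) ^ n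
      = ∑ j ∈ range (n + 1),
          monomial (Finsupp.single w j + Finsupp.single (Fin.last q) (n - j))
            ((n.choose j : ZMod 2)) := by
  rw [add_pow]
  refine Finset.sum_congr rfl fun j hj => ?_
  rw [X_pow_eq_monomial, X_pow_eq_monomial, monomial_mul, one_mul]
  have hcast : ((n.choose j : ℕ) : MvPolynomial (Fin (q + 1)) (ZMod 2))
      = C ((n.choose j : ZMod 2)) := by
    rw [← map_natCast (C : ZMod 2 →+* MvPolynomial (Fin (q + 1)) (ZMod 2))]
  rw [hcast, mul_comm, C_mul_monomial, mul_one]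

/-- Product of monomials. -/
lemma prod_monomial {ι : Type*} (t : Finset ι) (f : ι → (Fin (q + 1) →₀ ℕ)) (c : ι → ZMod 2) :
    ∏ i ∈ t, (monomial (f i) (c i) : MvPolynomial (Fin (q + 1)) (ZMod 2))
      = monomial (∑ i ∈ t, f i) (∏ i ∈ t, c i) := by
  classical
  induction t using Finset.induction_on with
  | empty => simp
  | insert _ _ hx ih =>
    rw [Finset.prod_insert hx, Finset.sum_insert hx, Finset.prod_insert hx, ih, monomial_mul]

/-- A monomial with some exponent `≥ m+1` lies in the ideal. -/
lemma monomial_mem_P {d : Fin (q + 1) →₀ ℕ} {c : ZMod 2} {w : Fin (q + 1)}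
    (hd : m + 1 ≤ d w) : (monomial d c : MvPolynomial (Fin (q + 1)) (ZMod 2))
      ∈ projIdeal m (q + 1) := by
  have hle : Finsupp.single w (m + 1) ≤ d := Finsupp.single_le_iff.mpr hd
  have heq : (monomial d c : MvPolynomial (Fin (q + 1)) (ZMod 2))
      = X w ^ (m + 1) * monomial (d - Finsupp.single w (m + 1)) c := by
    rw [X_pow_eq_monomial, monomial_mul, one_mul, add_tsub_cancel_of_le hle]
  rw [heq]
  exact Ideal.mul_mem_right _ _ (Ideal.subset_span ⟨w, rfl⟩)

/-- ideal membership kills small coefficients -/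
lemma P_coeff_zero {p : MvPolynomial (Fin (q + 1)) (ZMod 2)} (hp : p ∈ projIdeal m (q + 1))
    {d : Fin (q + 1) →₀ ℕ} (hd : ∀ w, d w ≤ m) : coeff d p = 0 := by
  rw [projIdeal, ← Ideal.submodule_span_eq, Submodule.mem_span_range_iff_exists_fun] at hp
  obtain ⟨c, hc⟩ := hp
  rw [← hc, coeff_sum]
  refine Finset.sum_eq_zero fun i _ => ?_
  rw [smul_eq_mul, X_pow_eq_monomial, coeff_mul_monomial']
  rw [if_neg]
  intro hle
  have := Finsupp.single_le_iff.mp hle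
  have := hd i
  omega



/-- Value of the exponent Finsupp. -/
lemma D_apply (a γ : Fin (q + 1) → ℕ) (w' : Fin (q + 1)) :
    (∑ w, (Finsupp.single w (γ w) + Finsupp.single (Fin.last q) (a w - γ w))) w'
      = γ w' + if Fin.last q = w' then ∑ w, (a w - γ w) else 0 := by
  rw [Finset.sum_apply']
  simp only [Finsupp.add_apply, Finset.sum_add_distrib]
  congr 1
  · simp only [Finsupp.single_apply]
    rw [Finset.sum_ite_eq' Finset.univ w' γ]
    simp
  · simp only [Finsupp.single_apply]
    split_ifs with h
    · rfl
    · simp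

/-- Main upper-bound lemma: a long enough product of the generators lies in the ideal. -/
lemma prod_mem_P {e : ℕ} (hEm : m % 2 ^ e = 2 ^ e - 1) (hdvd : 2 ^ e ∣ m + 1)
    (a : Fin (q + 1) → ℕ)
    (hsum : (q + 1) * m + 2 ≤ (∑ w, a w) + 2 ^ e) :
    ∏ w, (X w + X (Fin.last q) : MvPolynomial (Fin (q + 1)) (ZMod 2)) ^ a w
      ∈ projIdeal m (q + 1) := by
  by_cases hav : a (Fin.last q) = 0
  · simp_rw [factor_expand]
    rw [Finset.prod_univ_sum]
    refine Ideal.sum_mem _ fun γ hγmem => ?_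
    rw [prod_monomial]
    have hγle : ∀ w, γ w ≤ a w := by
      intro w
      have := (Fintype.mem_piFinset.mp hγmem) w
      rw [Finset.mem_range] at this
      omega
    by_cases hodd : ∀ w, (a w).choose (γ w) % 2 = 1
    · by_cases hsmall : ∀ w, γ w ≤ m
      · refine monomial_mem_P m q (w := Fin.last q) ?_
        rw [D_apply, if_pos rfl]
        -- key combinatorial estimate on t = univ.erase last
        set t : Finset (Fin (q + 1)) := Finset.univ.erase (Fin.last q) with ht
        have hcard : t.card = q := by
          rw [ht, Finset.card_erase_of_mem (Finset.mem_univ _), Finset.card_univ,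
            Fintype.card_fin]
          omega
        have hsum_t : ∑ w ∈ t, a w = ∑ w, a w := by
          rw [ht]
          exact Finset.sum_erase _ hav
        have hbig : ¬ (∑ w ∈ t, (a w - γ w) ≤ m) := by
          intro hble
          have hkey := key_comb hEm hdvd t γ (fun w => a w - γ w)
            (fun w _ => hsmall w)
            (fun w _ => by
              have h1 : γ w + (a w - γ w) = a w := by have := hγle w; omega
              rw [h1]
              have h2 : (a w).choose (a w - γ w) = (a w).choose (γ w) :=
                Nat.choose_symm (hγle w)
              rw [h2]; exact hodd w)
            hble
          have heq : ∑ w ∈ t, (γ w + (a w - γ w)) = ∑ w ∈ t, a w :=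
            Finset.sum_congr rfl fun w _ => by have := hγle w; omega
          rw [heq, hsum_t, hcard] at hkey
          have hqm : (q + 1) * m = q * m + m := by ring
          omega
        have hmono : ∑ w ∈ t, (a w - γ w) ≤ ∑ w, (a w - γ w) :=
          Finset.sum_le_sum_of_subset (Finset.subset_univ t)
        omega
      · push_neg at hsmall
        obtain ⟨w, hw⟩ := hsmall
        refine monomial_mem_P m q (w := w) ?_
        rw [D_apply]
        omega
    · push_neg at hodd
      obtain ⟨w, hw⟩ := hodd
      have hz : ((a w).choose (γ w) : ZMod 2) = 0 := by
        rw [ZMod.natCast_eq_zero_iff]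
        omega
      rw [Finset.prod_eq_zero (Finset.mem_univ w) hz, monomial_zero]
      exact Submodule.zero_mem _
  · have hz : (X (Fin.last q) + X (Fin.last q) :
        MvPolynomial (Fin (q + 1)) (ZMod 2)) ^ a (Fin.last q) = 0 := by
      rw [CharTwo.add_self_eq_zero, zero_pow hav]
    rw [Finset.prod_eq_zero (Finset.mem_univ (Fin.last q)) hz]
    exact Submodule.zero_mem _

/-- Lower-bound coefficient computation. -/
lemma coeff_prod_eq (a γs : Fin (q + 1) → ℕ) (hav : a (Fin.last q) = 0)
    (hγs : ∀ w, γs w ≤ a w) :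
    MvPolynomial.coeff
        (∑ w, (Finsupp.single w (γs w) + Finsupp.single (Fin.last q) (a w - γs w)))
        (∏ w, (X w + X (Fin.last q) : MvPolynomial (Fin (q + 1)) (ZMod 2)) ^ a w)
      = ∏ w, ((a w).choose (γs w) : ZMod 2) := by
  simp_rw [factor_expand]
  rw [Finset.prod_univ_sum, MvPolynomial.coeff_sum]
  have hγsmem : γs ∈ Fintype.piFinset (fun w => Finset.range (a w + 1)) := by
    rw [Fintype.mem_piFinset]
    intro w
    rw [Finset.mem_range]
    exact Nat.lt_succ_of_le (hγs w)
  rw [Finset.sum_eq_single γs]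
  · rw [prod_monomial, coeff_monomial, if_pos rfl]
  · intro γ hγmem hne
    rw [prod_monomial, coeff_monomial, if_neg]
    intro heq
    apply hne
    have hγle : ∀ w, γ w ≤ a w := by
      intro w
      have := (Fintype.mem_piFinset.mp hγmem) w
      rw [Finset.mem_range] at this
      omega
    funext w
    by_cases hwl : w = Fin.last q
    · subst hwl
      have h1 := hγle (Fin.last q)
      have h2 := hγs (Fin.last q)
      omega
    · have := congrArg (fun d => d w) heq
      rw [D_apply, D_apply] at this
      rw [if_neg (fun h => hwl h.symm), if_neg (fun h => hwl h.symm)] at this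
      omega
  · intro h
    exact absurd hγsmem h


lemma prod_mem_pow_card {R : Type*} [CommRing R] (K : Ideal R) {ι : Type*}
    (t : Finset ι) (f : ι → R) (h : ∀ i ∈ t, f i ∈ K) :
    ∏ i ∈ t, f i ∈ K ^ t.card := by
  classical
  induction t using Finset.induction_on with
  | empty => simp [Ideal.one_eq_top]
  | @insert x u hx ih =>
    rw [Finset.prod_insert hx, Finset.card_insert_of_notMem hx, pow_succ']
    exact Ideal.mul_mem_mul (h _ (Finset.mem_insert_self _ _))
      (ih fun i hi => h i (Finset.mem_insert_of_mem hi))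

lemma sup_pow_le {R : Type*} [CommRing R] (J P : Ideal R) :
    ∀ n : ℕ, (J ⊔ P) ^ n ≤ J ^ n ⊔ P
  | 0 => by simp
  | n + 1 => by
    rw [pow_succ]
    calc (J ⊔ P) ^ n * (J ⊔ P) ≤ (J ^ n ⊔ P) * (J ⊔ P) :=
          Ideal.mul_mono_left (sup_pow_le J P n)
    _ ≤ J ^ (n + 1) ⊔ P := by
        rw [Submodule.sup_mul, Submodule.mul_sup, Submodule.mul_sup]
        refine sup_le (sup_le ?_ ?_) (sup_le ?_ ?_)
        · rw [← pow_succ]; exact le_sup_left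
        · exact le_sup_of_le_right Ideal.mul_le_right
        · exact le_sup_of_le_right Ideal.mul_le_left
        · exact le_sup_of_le_right Ideal.mul_le_right

lemma Jpow_le {e : ℕ} (hEm : m % 2 ^ e = 2 ^ e - 1) (hdvd : 2 ^ e ∣ m + 1)
    {n : ℕ} (hn : (q + 1) * m + 2 ≤ n + 2 ^ e) :
    Jid q ^ n ≤ projIdeal m (q + 1) := by
  rw [Jid, Ideal.span, Submodule.span_pow, ← Ideal.span, Ideal.span_le]
  intro z hz
  rw [Set.mem_pow] at hz
  obtain ⟨F, hF⟩ := hz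
  rw [← hF, List.prod_ofFn]
  have hc : ∀ i : Fin n, ∃ w : Fin (q + 1), (F i : MvPolynomial (Fin (q + 1)) (ZMod 2))
      = X w + X (Fin.last q) := by
    intro i
    obtain ⟨w, hw⟩ := (F i).2
    exact ⟨w, hw.symm⟩
  choose c hcw using hc
  have h1 : ∏ i : Fin n, (F i : MvPolynomial (Fin (q + 1)) (ZMod 2))
      = ∏ i : Fin n, ((X (c i) + X (Fin.last q)) : MvPolynomial (Fin (q + 1)) (ZMod 2)) :=
    Finset.prod_congr rfl fun i _ => hcw i
  rw [h1]
  have h2a := Finset.prod_comp (s := (Finset.univ : Finset (Fin n)))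
    (fun w : Fin (q + 1) => ((X w + X (Fin.last q)) : MvPolynomial (Fin (q + 1)) (ZMod 2))) c
  have h2b : ∏ w ∈ Finset.univ.image c,
        ((X w + X (Fin.last q)) : MvPolynomial (Fin (q + 1)) (ZMod 2))
          ^ (Finset.univ.filter fun i => c i = w).card
      = ∏ w : Fin (q + 1), ((X w + X (Fin.last q)) : MvPolynomial (Fin (q + 1)) (ZMod 2))
          ^ (Finset.univ.filter fun i => c i = w).card := by
    refine Finset.prod_subset (Finset.subset_univ _) fun w _ hw => ?_
    have hemp : (Finset.univ.filter fun i => c i = w) = ∅ := by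
      rw [Finset.filter_eq_empty_iff]
      intro i _ hci
      exact hw (Finset.mem_image.mpr ⟨i, Finset.mem_univ i, hci⟩)
    rw [hemp]
    simp
  rw [h2a.trans h2b]
  refine SetLike.le_def.mp le_rfl (prod_mem_P m q hEm hdvd _ ?_)
  have h3 : (Finset.univ : Finset (Fin n)).card
      = ∑ w : Fin (q + 1), (Finset.univ.filter fun i => c i = w).card :=
    Finset.card_eq_sum_card_fiberwise fun x _ => Finset.mem_univ (c x)
  have h4 : (Finset.univ : Finset (Fin n)).card = n := by simp
  omega


lemma prod_eq_zero_of_ker {e : ℕ} (hEm : m % 2 ^ e = 2 ^ e - 1) (hdvd : 2 ^ e ∣ m + 1)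
    {N : ℕ} (hN : (q + 1) * m + 2 ≤ N + 2 ^ e) (f : Fin N → ProjRing m (q + 1))
    (hker : ∀ i, muHom m (q + 1) (f i) = 0) : ∏ i, f i = 0 := by
  choose p hp using fun i => Ideal.Quotient.mk_surjective (f i)
  have hmem : ∀ i, p i ∈ Jid q ⊔ projIdeal m (q + 1) := fun i =>
    ker_mu_mem m q (by rw [hp i]; exact hker i)
  have h1 : ∏ i, p i ∈ (Jid q ⊔ projIdeal m (q + 1)) ^ N := by
    have h := prod_mem_pow_card (Jid q ⊔ projIdeal m (q + 1)) Finset.univ p fun i _ => hmem i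
    rwa [Finset.card_univ, Fintype.card_fin] at h
  have h2 : ∏ i, p i ∈ projIdeal m (q + 1) :=
    (sup_le (Jpow_le m q hEm hdvd hN) le_rfl) (sup_pow_le _ _ N h1)
  have h3 : ∏ i, f i = Ideal.Quotient.mk (projIdeal m (q + 1)) (∏ i, p i) := by
    rw [map_prod]
    exact Finset.prod_congr rfl fun i _ => (hp i).symm
  rw [h3, Ideal.Quotient.eq_zero_iff_mem]
  exact h2

lemma lower_witness (a γs : Fin (q + 1) → ℕ) (hav : a (Fin.last q) = 0)
    (hγlast : γs (Fin.last q) = 0) (hγelse : ∀ w, w ≠ Fin.last q → γs w = m)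
    (hγs : ∀ w, γs w ≤ a w)
    (hodd : ∀ w, (a w).choose (γs w) % 2 = 1)
    (hbs : ∑ w, (a w - γs w) ≤ m) :
    ∃ f : Fin (∑ w, a w) → ProjRing m (q + 1),
      (∀ i, muHom m (q + 1) (f i) = 0) ∧ ∏ i, f i ≠ 0 := by
  have hcoeff := coeff_prod_eq q a γs hav hγs
  have hone : ∏ w, ((a w).choose (γs w) : ZMod 2) = 1 :=
    Finset.prod_eq_one fun w _ => by
      rw [← ZMod.natCast_mod, hodd w, Nat.cast_one]
  have hnotP : ∏ w, (X w + X (Fin.last q) : MvPolynomial (Fin (q + 1)) (ZMod 2)) ^ a w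
      ∉ projIdeal m (q + 1) := by
    intro hmem
    have hd : ∀ w', (∑ w, (Finsupp.single w (γs w)
        + Finsupp.single (Fin.last q) (a w - γs w))) w' ≤ m := by
      intro w'
      rw [D_apply]
      by_cases hwl : Fin.last q = w'
      · rw [if_pos hwl, ← hwl, hγlast]
        omega
      · rw [if_neg hwl, hγelse w' (fun h => hwl h.symm)]
        omega
    have := P_coeff_zero m q hmem hd
    rw [hcoeff, hone] at this
    exact one_ne_zero this
  have hcard : Fintype.card (Σ w : Fin (q + 1), Fin (a w)) = ∑ w, a w := by
    simp
  let e1 : (Σ w : Fin (q + 1), Fin (a w)) ≃ Fin (∑ w, a w) :=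
    Fintype.equivFinOfCardEq hcard
  refine ⟨fun k => Ideal.Quotient.mk (projIdeal m (q + 1))
    (X ((e1.symm k).1) + X (Fin.last q)), ?_, ?_⟩
  · intro k
    rw [mu_mk, map_add, aeval_X, aeval_X, CharTwo.add_self_eq_zero, map_zero]
  · have hpe : ∏ k : Fin (∑ w, a w),
        (X ((e1.symm k).1) + X (Fin.last q) : MvPolynomial (Fin (q + 1)) (ZMod 2))
        = ∏ w, (X w + X (Fin.last q) : MvPolynomial (Fin (q + 1)) (ZMod 2)) ^ a w := by
      rw [Equiv.prod_comp e1.symm (fun σ : Σ w : Fin (q + 1), Fin (a w) =>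
        (X σ.1 + X (Fin.last q) : MvPolynomial (Fin (q + 1)) (ZMod 2)))]
      rw [← Finset.univ_sigma_univ, Finset.prod_sigma]
      exact Finset.prod_congr rfl fun w _ => by
        simp
    intro h0
    apply hnotP
    rw [← Ideal.Quotient.eq_zero_iff_mem, ← hpe, map_prod]
    exact h0

end ZclAux

/-- Let `m` be a positive integer such that `m + 1` is not a power
of `2`, and set `e = e(m)`. Then for every integer `s ≥ r(m)`, one has
`zcl_s(m) = s·m - (2^e - 1)`. -/

theorem zcl_eq_of_rOf_le (m : ℕ) (hm : 1 ≤ m) (hpow : ¬ ∃ k, m + 1 = 2 ^ k)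
    (s : ℕ) (hs : rOf m ≤ s) :
    zclVal m s = s * m - (2 ^ eVal m - 1) := by
  have hs1 : 1 ≤ s := le_trans (by unfold rOf; omega) hs
  obtain ⟨q, rfl⟩ : ∃ q, s = q + 1 := ⟨s - 1, by omega⟩
  have hE : 0 < 2 ^ eVal m := Nat.pow_pos (by norm_num)
  have hEm : m % 2 ^ eVal m = 2 ^ eVal m - 1 := hmod_e hm hpow
  have hdvd : 2 ^ eVal m ∣ m + 1 := hdvd_e hm hpow
  have h3e : 3 * 2 ^ eVal m ≤ m + 1 := (hmod_e1 hm hpow).2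
  have hqm : (q + 1) * m = q * m + m := by ring
  -- the list of lower-bound exponents
  set L : List ℕ := (List.range (tVal m + 1)).flatMap
      (fun ℓ => List.replicate (rVal m ℓ) (dVal m ℓ)) with hLdef
  have hLsum : L.sum = m - (2 ^ eVal m - 1) := by
    rw [hLdef, flatMap_range_sum, ← sum_d_r hm hpow]
    refine Finset.sum_congr rfl fun ℓ _ => ?_
    rw [List.sum_replicate, smul_eq_mul]
    ring
  have hLlen : L.length ≤ q := by
    have h1 : L.length = ∑ ℓ ∈ Finset.range (tVal m + 1), rVal m ℓ := by
      rw [hLdef, flatMap_range_len]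
      exact Finset.sum_congr rfl fun ℓ _ => List.length_replicate
    have h2 : rOf m = 1 + ∑ ℓ ∈ Finset.range (tVal m + 1), rVal m ℓ := rfl
    omega
  have hLodd : ∀ x ∈ L, (m + x).choose x % 2 = 1 := by
    intro x hx
    rw [hLdef, List.mem_flatMap] at hx
    obtain ⟨ℓ, hℓ, hxr⟩ := hx
    have hxd := List.eq_of_mem_replicate hxr
    have hrpos : rVal m ℓ ≠ 0 := by
      intro h0
      rw [h0] at hxr
      simp at hxr
    subst hxd
    by_contra hcond
    apply hrpos
    unfold rVal rStep
    rw [if_neg hcond]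
  -- exponent functions for the lower bound
  set a : Fin (q + 1) → ℕ :=
    fun w => if w = Fin.last q then 0 else m + L.getD w.val 0 with ha
  set γs : Fin (q + 1) → ℕ := fun w => if w = Fin.last q then 0 else m with hγ
  have hcs : ∀ i : Fin q, a (Fin.castSucc i) = m + L.getD i.val 0 := by
    intro i
    rw [ha]
    simp only
    rw [if_neg (Fin.castSucc_lt_last i).ne, Fin.coe_castSucc]
  have hcsγ : ∀ i : Fin q, γs (Fin.castSucc i) = m := by
    intro i
    rw [hγ]
    simp only
    rw [if_neg (Fin.castSucc_lt_last i).ne]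
  have halast : a (Fin.last q) = 0 := by rw [ha]; simp
  have hγlast : γs (Fin.last q) = 0 := by rw [hγ]; simp
  have hsum_a : ∑ w, a w = q * m + (m - (2 ^ eVal m - 1)) := by
    rw [Fin.sum_univ_castSucc, halast]
    rw [Finset.sum_congr rfl fun i _ => hcs i]
    rw [Finset.sum_add_distrib, Finset.sum_const, Finset.card_univ, Fintype.card_fin,
      smul_eq_mul]
    rw [Fin.sum_univ_eq_sum_range (fun i => L.getD i 0) q, sum_getD L q hLlen, hLsum]
    omega
  have hbs_eq : ∑ w, (a w - γs w) = m - (2 ^ eVal m - 1) := by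
    rw [Fin.sum_univ_castSucc, halast, hγlast]
    rw [Finset.sum_congr rfl fun i _ => by rw [hcs i, hcsγ i]]
    have h1 : ∀ i : Fin q, m + L.getD i.val 0 - m = L.getD i.val 0 := fun i => by omega
    rw [Finset.sum_congr rfl fun i _ => h1 i]
    rw [Fin.sum_univ_eq_sum_range (fun i => L.getD i 0) q, sum_getD L q hLlen, hLsum]
    omega
  have hwne : ∀ w : Fin (q + 1), w ≠ Fin.last q → a w = m + L.getD w.val 0 := by
    intro w hw
    rw [ha]
    simp only
    rw [if_neg hw]
  have hγne : ∀ w : Fin (q + 1), w ≠ Fin.last q → γs w = m := by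
    intro w hw
    rw [hγ]
    simp only
    rw [if_neg hw]
  have hoddall : ∀ w, (a w).choose (γs w) % 2 = 1 := by
    intro w
    by_cases hwl : w = Fin.last q
    · subst hwl
      rw [halast, hγlast]
      simp
    · rw [hwne w hwl, hγne w hwl, Nat.choose_symm_add]
      by_cases hi : w.val < L.length
      · rw [List.getD_eq_getElem L 0 hi]
        exact hLodd _ (List.getElem_mem _)
      · rw [List.getD_eq_default L 0 (by omega)]
        simp
  have hγsle : ∀ w, γs w ≤ a w := by
    intro w
    by_cases hwl : w = Fin.last q
    · subst hwl; rw [halast, hγlast]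
    · rw [hwne w hwl, hγne w hwl]; omega
  obtain ⟨f, hker, hprod⟩ := ZclAux.lower_witness m q a γs halast hγlast hγne hγsle hoddall
    (by rw [hbs_eq]; omega)
  have hN : ∑ w, a w = (q + 1) * m - (2 ^ eVal m - 1) := by rw [hsum_a]; omega
  have hmemS : ((q + 1) * m - (2 ^ eVal m - 1)) ∈ {N | ∃ f : Fin N → ProjRing m (q + 1),
      (∀ i, muHom m (q + 1) (f i) = 0) ∧ ∏ i, f i ≠ 0} := by
    rw [← hN]
    exact ⟨f, hker, hprod⟩
  have hub : ∀ N ∈ {N | ∃ f : Fin N → ProjRing m (q + 1),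
      (∀ i, muHom m (q + 1) (f i) = 0) ∧ ∏ i, f i ≠ 0},
      N ≤ (q + 1) * m - (2 ^ eVal m - 1) := by
    rintro N ⟨g, hgker, hgprod⟩
    by_contra hlt
    push_neg at hlt
    exact hgprod (ZclAux.prod_eq_zero_of_ker m q hEm hdvd (by omega) g hgker)
  show sSup _ = _
  exact le_antisymm (csSup_le ⟨_, hmemS⟩ hub) (le_csSup ⟨_, hub⟩ hmemS)
end

section
/- For every positive integer m there exists an integer s_0 ≥ 2 such that for all s ≥ s_0, zcl_s(m) = s·m - (2^{e(m)} - 1). (Equivalently, the non-increasing sequence of gaps G_s(m) = s·m - zcl_s(m) stabilizes to the exact value G(m) = 2^{e(m)} - 1.) -/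
set_option maxHeartbeats 1000000
set_option synthInstance.maxHeartbeats 100000


open Finset

section ZclAuxSection


lemma two_pow_eVal_dvd (m : ℕ) : 2 ^ eVal m ∣ m + 1 := pow_padicValNat_dvd

/-- decomposition: m + 1 = 2^e * (c+1) -/
lemma m_decomp (m : ℕ) : ∃ c, m + 1 = 2 ^ eVal m * (c + 1) := by
  obtain ⟨t, ht⟩ := two_pow_eVal_dvd m
  rcases t with _ | c
  · rw [mul_zero] at ht; omega
  · exact ⟨c, ht⟩

lemma u_odd (m : ℕ) (hm : 1 ≤ m) : ¬ 2 ∣ ((m + 1) / 2 ^ eVal m) := by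
  intro ⟨v, hv⟩
  have hEpos : 0 < 2 ^ eVal m := Nat.pow_pos (by norm_num)
  have ht : 2 ^ eVal m * ((m + 1) / 2 ^ eVal m) = m + 1 :=
    Nat.mul_div_cancel' (two_pow_eVal_dvd m)
  have h1 : 2 ^ (eVal m + 1) ∣ m + 1 :=
    ⟨v, by rw [← ht, hv, pow_succ]; ring⟩
  exact pow_succ_padicValNat_not_dvd (by omega) h1

/-- Kummer: odd binomial coefficient means no carries -/
lemma carry_of_odd {k a : ℕ} (h : (k + a).choose k % 2 = 1) (j : ℕ) :
    k % 2 ^ j + a % 2 ^ j < 2 ^ j := by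
  rcases Nat.eq_zero_or_pos j with rfl | hj
  · simp only [pow_zero]; omega
  have hodd : ¬ 2 ∣ (a + k).choose k := by rw [Nat.add_comm a k]; omega
  haveI : Fact (Nat.Prime 2) := ⟨Nat.prime_two⟩
  have hb : Nat.log 2 (a + k) < Nat.log 2 (a + k) + j + 1 := by omega
  have hv : padicValNat 2 ((a + k).choose k) = 0 :=
    padicValNat.eq_zero_iff.mpr (Or.inr (Or.inr hodd))
  rw [padicValNat_choose' hb] at hv
  have hemp := Finset.card_eq_zero.mp hv
  by_contra hcon
  have hjmem : j ∈ (Finset.Ico 1 (Nat.log 2 (a + k) + j + 1)).filter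
      (fun i => 2 ^ i ≤ k % 2 ^ i + a % 2 ^ i) := by
    simp only [Finset.mem_filter, Finset.mem_Ico]
    omega
  rw [hemp] at hjmem
  simp at hjmem

lemma odd_of_carry {k a : ℕ} (h : ∀ j, 1 ≤ j → k % 2 ^ j + a % 2 ^ j < 2 ^ j) :
    (k + a).choose k % 2 = 1 := by
  haveI : Fact (Nat.Prime 2) := ⟨Nat.prime_two⟩
  have hb : Nat.log 2 (a + k) < Nat.log 2 (a + k) + 1 := by omega
  have hv : padicValNat 2 ((a + k).choose k) = 0 := by
    rw [padicValNat_choose' hb]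
    apply Finset.card_eq_zero.mpr
    apply Finset.filter_false_of_mem
    intro i hi
    simp only [Finset.mem_Ico] at hi
    have := h i hi.1
    omega
  have hpos : 0 < (a + k).choose k := Nat.choose_pos (by omega)
  rw [padicValNat.eq_zero_iff] at hv
  have hnd : ¬ 2 ∣ (a + k).choose k := by
    rcases hv with h1 | h2 | h3
    · omega
    · omega
    · exact h3
  rw [Nat.add_comm a k] at hnd
  omega

lemma mod_helper {x n t r : ℕ} (h : x = n * t + r) (hr : r < n) : x % n = r := by
  rw [h, Nat.mul_add_mod]; exact Nat.mod_eq_of_lt hr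

/-- Key upper bound arithmetic. -/
lemma diamond {m : ℕ} (hm : 1 ≤ m) {ι : Type*} (S : Finset ι) (n k : ι → ℕ)
    (hodd : ∀ i ∈ S, (n i).choose (k i) % 2 = 1) (hk : ∀ i ∈ S, k i ≤ m)
    (hkn : ∀ i ∈ S, k i ≤ n i) (ha : ∑ i ∈ S, (n i - k i) ≤ m) :
    ∑ i ∈ S, n i + (2 ^ eVal m - 1) ≤ (S.card + 1) * m := by
  classical
  obtain ⟨c, hc⟩ := m_decomp m
  have hcar : ∀ i ∈ S, k i % 2 ^ eVal m + (n i - k i) % 2 ^ eVal m < 2 ^ eVal m := by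
    intro i hi
    have hoddh := hodd i hi
    have hni : k i + (n i - k i) = n i := by have := hkn i hi; omega
    rw [← hni] at hoddh
    exact carry_of_odd hoddh (eVal m)
  have hEpos : 0 < 2 ^ eVal m := Nat.pow_pos (by norm_num)
  generalize hE : 2 ^ eVal m = E at hc hcar hEpos ⊢
  have hce : E * (c + 1) = E * c + E := by ring
  have hm' : m = E * c + (E - 1) := by omega
  have hlin : (S.card + 1) * m = S.card * m + m := by ring
  have h1 : ∑ i ∈ S, n i = ∑ i ∈ S, k i + ∑ i ∈ S, (n i - k i) := by
    rw [← Finset.sum_add_distrib]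
    apply Finset.sum_congr rfl
    intro i hi; have := hkn i hi; omega
  have h2 : ∑ i ∈ S, k i + ∑ i ∈ S, (m - k i) = S.card * m := by
    rw [← Finset.sum_add_distrib]
    rw [show (∑ i ∈ S, (k i + (m - k i))) = ∑ i ∈ S, m from
      Finset.sum_congr rfl (fun i hi => by have := hk i hi; omega)]
    rw [Finset.sum_const, smul_eq_mul]
  by_contra hcon
  push_neg at hcon
  have hDd : ∑ i ∈ S, (m - k i) + (m - ∑ i ∈ S, (n i - k i)) + 2 ≤ E := by omega
  have key : ∀ i ∈ S, (n i - k i) % E ≤ m - k i := by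
    intro i hi
    have hdi : m - k i ≤ ∑ j ∈ S, (m - k j) :=
      Finset.single_le_sum (f := fun j => m - k j) (fun j _ => Nat.zero_le _) hi
    have hki : k i % E = E - 1 - (m - k i) := by
      apply mod_helper (t := c)
      · have := hk i hi; omega
      · omega
    have := hcar i hi
    omega
  have hA : ∑ i ∈ S, (n i - k i) % E ≤ ∑ i ∈ S, (m - k i) := Finset.sum_le_sum key
  have hAlt : ∑ i ∈ S, (n i - k i) % E < E := by omega
  have hmodsum : (∑ i ∈ S, (n i - k i)) % E = ∑ i ∈ S, (n i - k i) % E := by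
    rw [Finset.sum_nat_mod]
    exact Nat.mod_eq_of_lt hAlt
  have hfin : (∑ i ∈ S, (n i - k i)) % E
      = E - 1 - (m - ∑ i ∈ S, (n i - k i)) := by
    apply mod_helper (t := c) <;> omega
  omega

/-- lower bound arithmetic: C(m + 2^e, m) is odd -/
lemma odd_lower (m : ℕ) (hm : 1 ≤ m) : (m + 2 ^ eVal m).choose m % 2 = 1 := by
  apply odd_of_carry
  intro j hj
  obtain ⟨c, hc⟩ := m_decomp m
  have hEpos : 0 < 2 ^ eVal m := Nat.pow_pos (by norm_num)
  have hjpos : 0 < 2 ^ j := Nat.pow_pos (by norm_num)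
  rcases le_or_gt j (eVal m) with hje | hje
  · have h1 : (2:ℕ) ^ j ∣ 2 ^ eVal m := pow_dvd_pow 2 hje
    have h2 : (2:ℕ) ^ j ∣ m + 1 := h1.trans (two_pow_eVal_dvd m)
    obtain ⟨y, hy⟩ := h1
    obtain ⟨w, hw⟩ := h2
    rcases w with _ | w'
    · omega
    have h3 : (2:ℕ) ^ eVal m % 2 ^ j = 0 := by
      apply mod_helper (t := y) (r := 0) <;> omega
    have hji : (2:ℕ) ^ j * (w' + 1) = 2 ^ j * w' + 2 ^ j := by ring
    have h4 : m % 2 ^ j = 2 ^ j - 1 := by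
      apply mod_helper (t := w') <;> omega
    omega
  · -- j > e
    have hElt : (2:ℕ) ^ eVal m < 2 ^ j := Nat.pow_lt_pow_right one_lt_two hje
    have hEj : 2 ^ eVal m % 2 ^ j = 2 ^ eVal m := Nat.mod_eq_of_lt hElt
    have hcu : (m + 1) / 2 ^ eVal m = c + 1 := by
      rw [hc, Nat.mul_div_cancel_left _ hEpos]
    have hodd' := u_odd m hm
    rw [hcu] at hodd'
    have hceven : c % 2 = 0 := by omega
    have hqt : (2:ℕ) ^ (j - (eVal m + 1)) * (c / 2 / 2 ^ (j - (eVal m + 1)))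
        + (c / 2) % 2 ^ (j - (eVal m + 1)) = c / 2 := Nat.div_add_mod _ _
    have hXpos : (0:ℕ) < 2 ^ (j - (eVal m + 1)) := Nat.pow_pos (by norm_num)
    have hqlt : (c / 2) % 2 ^ (j - (eVal m + 1)) < 2 ^ (j - (eVal m + 1)) :=
      Nat.mod_lt _ hXpos
    have hBX : (2:ℕ) ^ j = (2 ^ (eVal m) * 2) * 2 ^ (j - (eVal m + 1)) := by
      rw [mul_assoc, ← pow_succ']
      rw [← pow_add]
      congr 1
      omega
    -- m = 2^j * t + (2E*q + (E-1))
    have hm3 : m = 2 ^ j * (c / 2 / 2 ^ (j - (eVal m + 1)))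
        + (2 ^ eVal m * 2 * ((c / 2) % 2 ^ (j - (eVal m + 1))) + (2 ^ eVal m - 1)) := by
      have hce : (2:ℕ) ^ eVal m * (c + 1) = 2 ^ eVal m * c + 2 ^ eVal m := by ring
      have hcc : c = 2 * (c / 2) := by omega
      have hEc : 2 ^ eVal m * c = 2 ^ j * (c / 2 / 2 ^ (j - (eVal m + 1)))
          + 2 ^ eVal m * 2 * ((c / 2) % 2 ^ (j - (eVal m + 1))) := by
        rw [hBX]
        have h5 : 2 ^ eVal m * c = 2 ^ eVal m * 2 * (c/2) := by
          conv_lhs => rw [hcc]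
          ring
        calc 2 ^ eVal m * c = 2 ^ eVal m * 2 * (c/2) := h5
        _ = 2 ^ eVal m * 2 * (2 ^ (j - (eVal m + 1)) * (c / 2 / 2 ^ (j - (eVal m + 1)))
              + (c / 2) % 2 ^ (j - (eVal m + 1))) := by rw [hqt]
        _ = 2 ^ eVal m * 2 * 2 ^ (j - (eVal m + 1)) * (c / 2 / 2 ^ (j - (eVal m + 1)))
              + 2 ^ eVal m * 2 * ((c / 2) % 2 ^ (j - (eVal m + 1))) := by ring
      omega
    have hBq : 2 ^ eVal m * 2 * ((c / 2) % 2 ^ (j - (eVal m + 1)) + 1)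
        ≤ 2 ^ eVal m * 2 * 2 ^ (j - (eVal m + 1)) := Nat.mul_le_mul_left _ (by omega)
    have hBq' : 2 ^ eVal m * 2 * ((c / 2) % 2 ^ (j - (eVal m + 1)) + 1)
        = 2 ^ eVal m * 2 * ((c / 2) % 2 ^ (j - (eVal m + 1))) + 2 ^ eVal m * 2 := by ring
    have h4 : m % 2 ^ j = 2 ^ eVal m * 2 * ((c / 2) % 2 ^ (j - (eVal m + 1)))
        + (2 ^ eVal m - 1) := by
      apply mod_helper hm3
      rw [hBX]
      omega
    omega



open MvPolynomial in
/-- The ideal of polynomials all of whose "low" coefficients vanish. -/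
noncomputable def lowIdeal (m s : ℕ) : Ideal (MvPolynomial (Fin s) (ZMod 2)) where
  carrier := {p | ∀ β : Fin s →₀ ℕ, (∀ i, β i ≤ m) → coeff β p = 0}
  add_mem' := by
    intro a b ha hb β hβ
    rw [coeff_add, ha β hβ, hb β hβ, add_zero]
  zero_mem' := by intro β hβ; simp
  smul_mem' := by
    intro c p hp
    intro β hβ
    rw [smul_eq_mul, coeff_mul]
    apply Finset.sum_eq_zero
    rintro ⟨γ, δ⟩ hmem
    rw [Finset.HasAntidiagonal.mem_antidiagonal] at hmem
    have hδ : ∀ i, δ i ≤ m := by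
      intro i
      have : γ i + δ i = β i := by rw [← hmem]; simp
      have := hβ i
      omega
    rw [hp δ hδ, mul_zero]

open MvPolynomial in
lemma mem_lowIdeal_iff {m s : ℕ} (p : MvPolynomial (Fin s) (ZMod 2)) :
    p ∈ lowIdeal m s ↔ ∀ β : Fin s →₀ ℕ, (∀ i, β i ≤ m) → coeff β p = 0 := Iff.rfl

open MvPolynomial in
lemma projIdeal_le_lowIdeal (m s : ℕ) : projIdeal m s ≤ lowIdeal m s := by
  rw [projIdeal, Ideal.span_le]
  rintro q ⟨i, rfl⟩
  intro β hβ
  show coeff β (X i ^ (m+1)) = 0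
  rw [X_pow_eq_monomial, coeff_monomial]
  rw [if_neg]
  intro h
  have : β i = m + 1 := by rw [← h]; simp
  have := hβ i
  omega

open MvPolynomial in
lemma lowIdeal_le_projIdeal (m s : ℕ) : lowIdeal m s ≤ projIdeal m s := by
  intro p hp
  rw [← support_sum_monomial_coeff p]
  apply Ideal.sum_mem
  intro β hβ
  have hβ' : ¬ (∀ i, β i ≤ m) := by
    intro h
    exact (mem_support_iff.mp hβ) (hp β h)
  push_neg at hβ'
  obtain ⟨i, hi⟩ := hβ'
  have hle : Finsupp.single i (m+1) ≤ β := by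
    rw [Finsupp.single_le_iff]
    omega
  have : monomial β (coeff β p)
      = X i ^ (m+1) * monomial (β - Finsupp.single i (m+1)) (coeff β p) := by
    rw [X_pow_eq_monomial, monomial_mul, one_mul, add_tsub_cancel_of_le hle]
  rw [this]
  exact Ideal.mul_mem_right _ _ (Ideal.subset_span ⟨i, rfl⟩)

open MvPolynomial in
lemma mem_projIdeal_iff {m s : ℕ} (p : MvPolynomial (Fin s) (ZMod 2)) :
    p ∈ projIdeal m s ↔ ∀ β : Fin s →₀ ℕ, (∀ i, β i ≤ m) → coeff β p = 0 :=
  ⟨fun h => projIdeal_le_lowIdeal m s h, fun h => lowIdeal_le_projIdeal m s h⟩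

open MvPolynomial in
lemma X_add_X_pow {s : ℕ} (b a : Fin s) (N : ℕ) :
    ((X b + X a : MvPolynomial (Fin s) (ZMod 2)) ^ N) =
      ∑ j ∈ Finset.range (N+1),
        monomial (Finsupp.single a j + Finsupp.single b (N - j))
          ((N.choose j : ℕ) : ZMod 2) := by
  rw [add_comm (X b) (X a), add_pow]
  apply Finset.sum_congr rfl
  intro j hj
  rw [X_pow_eq_monomial, X_pow_eq_monomial, monomial_mul, mul_one]
  rw [show ((N.choose j : ℕ) : MvPolynomial (Fin s) (ZMod 2))
      = C ((N.choose j : ℕ) : ZMod 2) by push_cast; rfl]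
  rw [mul_comm, C_mul_monomial, mul_one]

open MvPolynomial in
lemma coeff_prodPow {s : ℕ} [NeZero s] (S : Finset (Fin s)) (n : Fin s → ℕ) :
    ∀ β : Fin s →₀ ℕ, (0:Fin s) ∉ S →
    coeff β (∏ i ∈ S, (X 0 + X i : MvPolynomial (Fin s) (ZMod 2)) ^ n i) =
      if (∀ i ∈ S, β i ≤ n i) ∧ (∀ i, i ∉ S → i ≠ 0 → β i = 0)
          ∧ β 0 = ∑ i ∈ S, (n i - β i)
      then ∏ i ∈ S, (((n i).choose (β i) : ℕ) : ZMod 2) else 0 := by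
  classical
  induction S using Finset.induction_on with
  | empty =>
    intro β _
    simp only [Finset.prod_empty, coeff_one, Finset.sum_empty, Finset.notMem_empty]
    by_cases hβ : β = 0
    · subst hβ
      simp
    · rw [if_neg (fun h => hβ h.symm)]; refine (if_neg ?_).symm
      rintro ⟨-, h2, h3⟩
      apply hβ
      ext i
      rcases eq_or_ne i 0 with rfl | hi
      · simpa using h3
      · simpa using h2 i (fun h => h.elim) hi
  | @insert a S' haS' IH =>
    intro β h0
    have ha0 : a ≠ 0 := fun h => h0 (h ▸ Finset.mem_insert_self a S')
    have h0S' : (0:Fin s) ∉ S' := fun h => h0 (Finset.mem_insert_of_mem h)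
    rw [Finset.prod_insert haS', mul_comm, X_add_X_pow 0 a (n a), Finset.mul_sum]
    rw [coeff_sum]
    simp only [coeff_mul_monomial']
    rw [Finset.sum_eq_single (β a)]
    rotate_left
    · -- other j vanish
      intro j hj hne
      rw [Finset.mem_range] at hj
      split_ifs with hle
      · have hja : j ≤ β a := by
          have := (Finsupp.le_def.mp hle) a
          simpa [Finsupp.add_apply, Finsupp.single_apply, (Ne.symm ha0 : ¬ (0:Fin s) = a)]
            using this
        have hlt : j < β a := lt_of_le_of_ne hja hne
        rw [IH _ h0S', if_neg, zero_mul]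
        rintro ⟨-, h2, -⟩
        have := h2 a haS' ha0
        rw [Finsupp.tsub_apply] at this
        have hda : (Finsupp.single a j + Finsupp.single 0 (n a - j) : Fin s →₀ ℕ) a = j := by
          simp [Finsupp.add_apply, Finsupp.single_apply, (Ne.symm ha0 : ¬ (0:Fin s) = a)]
        rw [hda] at this
        omega
      · rfl
    · -- β a out of range
      intro hout
      rw [Finset.mem_range] at hout
      have : (n a).choose (β a) = 0 := Nat.choose_eq_zero_of_lt (by omega)
      rw [this]
      push_cast
      split_ifs <;> simp
    -- main term j = β a
    by_cases hβa : β a ≤ n a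
    swap
    · -- β a > n a : both sides 0
      have hch : (n a).choose (β a) = 0 := Nat.choose_eq_zero_of_lt (by omega)
      split_ifs with h1 h2 h3
      · exact absurd (h2.1 a (Finset.mem_insert_self a S')) hβa
      · rw [hch]; simp
      · exact absurd (h3.1 a (Finset.mem_insert_self a S')) hβa
      · rfl
    -- now β a ≤ n a
    have hd_apply : ∀ i, (Finsupp.single a (β a) + Finsupp.single 0 (n a - β a) : Fin s →₀ ℕ) i
        = (if a = i then β a else 0) + (if (0:Fin s) = i then n a - β a else 0) := by
      intro i
      rw [Finsupp.add_apply, Finsupp.single_apply, Finsupp.single_apply]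
    by_cases hle : (Finsupp.single a (β a) + Finsupp.single 0 (n a - β a) : Fin s →₀ ℕ) ≤ β
    · rw [if_pos hle]
      have hle0 : n a - β a ≤ β 0 := by
        have h := (Finsupp.le_def.mp hle) 0
        rw [hd_apply 0, if_neg ha0, if_pos rfl] at h
        omega
      rw [IH _ h0S']
      have hsub : ∀ i, (β - (Finsupp.single a (β a) + Finsupp.single 0 (n a - β a)) : Fin s →₀ ℕ) i
          = β i - ((if a = i then β a else 0) + (if (0:Fin s) = i then n a - β a else 0)) := by
        intro i
        rw [Finsupp.tsub_apply, hd_apply i]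
      have hsubS' : ∀ i ∈ S',
          (β - (Finsupp.single a (β a) + Finsupp.single 0 (n a - β a)) : Fin s →₀ ℕ) i = β i := by
        intro i hi
        rw [hsub i, if_neg (by rintro rfl; exact haS' hi),
          if_neg (by rintro rfl; exact h0S' hi)]
        simp
      have hsuba : (β - (Finsupp.single a (β a) + Finsupp.single 0 (n a - β a)) : Fin s →₀ ℕ) a = 0 := by
        rw [hsub a, if_pos rfl, if_neg (Ne.symm ha0)]
        omega
      have hsub0 : (β - (Finsupp.single a (β a) + Finsupp.single 0 (n a - β a)) : Fin s →₀ ℕ) 0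
          = β 0 - (n a - β a) := by
        rw [hsub 0, if_neg ha0, if_pos rfl]
        omega
      have hsumS' : ∑ i ∈ S', (n i -
          (β - (Finsupp.single a (β a) + Finsupp.single 0 (n a - β a)) : Fin s →₀ ℕ) i)
          = ∑ i ∈ S', (n i - β i) :=
        Finset.sum_congr rfl (fun i hi => by rw [hsubS' i hi])
      by_cases hcond : (∀ i ∈ insert a S', β i ≤ n i)
          ∧ (∀ i, i ∉ insert a S' → i ≠ 0 → β i = 0)
          ∧ β 0 = ∑ i ∈ insert a S', (n i - β i)
      · rw [if_pos hcond]
        obtain ⟨hc1, hc2, hc3⟩ := hcond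
        rw [if_pos]
        swap
        · refine ⟨?_, ?_, ?_⟩
          · intro i hi
            rw [hsubS' i hi]
            exact hc1 i (Finset.mem_insert_of_mem hi)
          · intro i hiS hi0
            rcases eq_or_ne i a with rfl | hia
            · exact hsuba
            · rw [hsub i, if_neg (fun h => hia h.symm), if_neg (fun h => hi0 h.symm)]
              have := hc2 i (by simp [hia, hiS]) hi0
              omega
          · rw [hsub0, hsumS']
            rw [Finset.sum_insert haS'] at hc3
            omega
        · rw [Finset.prod_insert haS', mul_comm]
          congr 1
          apply Finset.prod_congr rfl
          intro i hi
          rw [hsubS' i hi]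
      · rw [if_neg hcond, if_neg, zero_mul]
        rintro ⟨hc1, hc2, hc3⟩
        apply hcond
        refine ⟨?_, ?_, ?_⟩
        · intro i hi
          rcases Finset.mem_insert.mp hi with rfl | hiS'
          · exact hβa
          · have := hc1 i hiS'
            rw [hsubS' i hiS'] at this
            exact this
        · intro i hiS hi0
          have hia : i ≠ a := fun h => hiS (h ▸ Finset.mem_insert_self a S')
          have := hc2 i (fun h => hiS (Finset.mem_insert_of_mem h)) hi0
          rw [hsub i, if_neg (fun h => hia h.symm), if_neg (fun h => hi0 h.symm)] at this
          omega
        · rw [Finset.sum_insert haS']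
          have hc3' := hc3
          rw [hsub0, hsumS'] at hc3'
          omega
    · rw [if_neg hle, if_neg]
      rintro ⟨hc1, hc2, hc3⟩
      apply hle
      rw [Finsupp.le_def]
      intro i
      rw [hd_apply i]
      rcases eq_or_ne i a with rfl | hia
      · rw [if_pos rfl, if_neg (Ne.symm ha0)]
        omega
      · rw [if_neg (fun h => hia h.symm)]
        rcases eq_or_ne i 0 with rfl | hi0
        · rw [if_pos rfl, hc3, Finset.sum_insert haS']
          omega
        · rw [if_neg (fun h => hi0 h.symm)]
          omega

open MvPolynomial in
lemma muHom_mk (m s : ℕ) (p : MvPolynomial (Fin s) (ZMod 2)) :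
    muHom m s (Ideal.Quotient.mk (projIdeal m s) p)
      = Ideal.Quotient.mk (Ideal.span {(Polynomial.X : Polynomial (ZMod 2)) ^ (m + 1)})
          ((MvPolynomial.aeval fun _ : Fin s => (Polynomial.X : Polynomial (ZMod 2))) p) := by
  rw [muHom]
  rfl

open MvPolynomial in
/-- the ideal generated by the `x_1 + x_i` in the polynomial ring -/
noncomputable def Jdl (m s : ℕ) [NeZero s] : Ideal (MvPolynomial (Fin s) (ZMod 2)) :=
  Ideal.span (Set.range fun i : Fin s => (X 0 + X i : MvPolynomial (Fin s) (ZMod 2)))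

open MvPolynomial in
lemma ker_muHom_le (m s : ℕ) [NeZero s] (z : ProjRing m s) (hz : muHom m s z = 0) :
    z ∈ Ideal.map (Ideal.Quotient.mk (projIdeal m s)) (Jdl m s) := by
  obtain ⟨p, rfl⟩ := Ideal.Quotient.mk_surjective z
  rw [muHom_mk, Ideal.Quotient.eq_zero_iff_mem] at hz
  obtain ⟨h, hh⟩ := Ideal.mem_span_singleton'.mp hz
  set ψ : Polynomial (ZMod 2) →ₐ[ZMod 2] MvPolynomial (Fin s) (ZMod 2) :=
    Polynomial.aeval (X 0) with hψ
  have hq : ψ ((MvPolynomial.aeval fun _ : Fin s => (Polynomial.X : Polynomial (ZMod 2))) p)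
      ∈ projIdeal m s := by
    rw [← hh, map_mul, map_pow, hψ, Polynomial.aeval_X]
    exact Ideal.mul_mem_left _ _ (Ideal.subset_span ⟨0, rfl⟩)
  have hcong : (Ideal.Quotient.mkₐ (ZMod 2) (Jdl m s)).comp
      (ψ.comp (MvPolynomial.aeval fun _ : Fin s => (Polynomial.X : Polynomial (ZMod 2))))
      = Ideal.Quotient.mkₐ (ZMod 2) (Jdl m s) := by
    apply MvPolynomial.algHom_ext
    intro i
    simp only [AlgHom.comp_apply, MvPolynomial.aeval_X, hψ, Polynomial.aeval_X,
      Ideal.Quotient.mkₐ_eq_mk]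
    rw [Ideal.Quotient.eq, CharTwo.sub_eq_add]
    exact Ideal.subset_span ⟨i, rfl⟩
  have hdiff : p - ψ ((MvPolynomial.aeval fun _ : Fin s =>
      (Polynomial.X : Polynomial (ZMod 2))) p) ∈ Jdl m s := by
    rw [← Ideal.Quotient.eq]
    have := DFunLike.congr_fun hcong p
    simpa using this.symm
  have hfin : Ideal.Quotient.mk (projIdeal m s) p
      = Ideal.Quotient.mk (projIdeal m s) (p - ψ ((MvPolynomial.aeval fun _ : Fin s =>
        (Polynomial.X : Polynomial (ZMod 2))) p)) := by
    rw [map_sub, Ideal.Quotient.eq_zero_iff_mem.mpr hq, sub_zero]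
  rw [hfin]
  exact Ideal.mem_map_of_mem _ hdiff

lemma prod_mem_pow {R : Type*} [CommRing R] (I : Ideal R) {ι : Type*} (t : Finset ι) (f : ι → R)
    (h : ∀ i ∈ t, f i ∈ I) : ∏ i ∈ t, f i ∈ I ^ t.card := by
  classical
  induction t using Finset.induction_on with
  | empty =>
    rw [Finset.prod_empty, Finset.card_empty, pow_zero, Ideal.one_eq_top]
    trivial
  | @insert a t' ha IH =>
    rw [Finset.prod_insert ha, Finset.card_insert_of_notMem ha, pow_succ']
    exact Ideal.mul_mem_mul (h a (Finset.mem_insert_self a t'))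
      (IH (fun i hi => h i (Finset.mem_insert_of_mem hi)))

open MvPolynomial Pointwise in
lemma Jdl_pow_le (m s : ℕ) [NeZero s] (hm : 1 ≤ m) (hs : 1 ≤ s) :
    Jdl m s ^ (s * m - (2 ^ eVal m - 1) + 1) ≤ projIdeal m s := by
  classical
  set N := s * m - (2 ^ eVal m - 1) + 1 with hNdef
  rw [Jdl]
  have hsp : Ideal.span (Set.range fun i : Fin s =>
        (X 0 + X i : MvPolynomial (Fin s) (ZMod 2))) ^ N
      = Ideal.span ((Set.range fun i : Fin s =>
        (X 0 + X i : MvPolynomial (Fin s) (ZMod 2))) ^ N) := Submodule.span_pow _ N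
  rw [hsp, Ideal.span_le]
  rintro g hg
  rw [Set.mem_pow] at hg
  obtain ⟨f, hf⟩ := hg
  have hex : ∀ j : Fin N, ∃ i : Fin s, (X 0 + X i : MvPolynomial (Fin s) (ZMod 2)) = ↑(f j) :=
    fun j => (f j).2
  choose idx hidx using hex
  have hprod : g = ∏ j : Fin N, (X 0 + X (idx j) : MvPolynomial (Fin s) (ZMod 2)) := by
    rw [← hf, List.prod_ofFn]
    exact Finset.prod_congr rfl (fun j _ => (hidx j).symm)
  by_cases hzero : ∃ j, idx j = 0
  · obtain ⟨j, hj⟩ := hzero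
    have : g = 0 := by
      rw [hprod]
      apply Finset.prod_eq_zero (Finset.mem_univ j)
      rw [hj, CharTwo.add_self_eq_zero]
    rw [SetLike.mem_coe, this]
    exact Submodule.zero_mem _
  · push_neg at hzero
    set T := (Finset.univ : Finset (Fin s)).erase 0 with hT
    have himg : ∀ j ∈ (Finset.univ : Finset (Fin N)), idx j ∈ T := by
      intro j _
      exact Finset.mem_erase.mpr ⟨hzero j, Finset.mem_univ _⟩
    set n : Fin s → ℕ := fun i => #{j ∈ (Finset.univ : Finset (Fin N)) | idx j = i} with hn
    have hgT : g = ∏ i ∈ T, (X 0 + X i : MvPolynomial (Fin s) (ZMod 2)) ^ n i := by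
      rw [hprod, Finset.prod_comp (fun i => (X 0 + X i : MvPolynomial (Fin s) (ZMod 2))) idx]
      apply Finset.prod_subset
      · intro i hi
        rw [Finset.mem_image] at hi
        obtain ⟨j, _, rfl⟩ := hi
        exact himg j (Finset.mem_univ j)
      · intro i _ hnot
        have hfz : #(Finset.filter (fun a => idx a = i) Finset.univ) = 0 := by
          rw [Finset.card_eq_zero]
          apply Finset.filter_false_of_mem
          intro j _
          intro hji
          exact hnot (Finset.mem_image.mpr ⟨j, Finset.mem_univ j, hji⟩)
        rw [hfz, pow_zero]
    have hNsum : N = ∑ i ∈ T, n i := by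
      have := Finset.card_eq_sum_card_fiberwise himg
      simpa using this
    rw [SetLike.mem_coe, mem_projIdeal_iff]
    intro β hβ
    rw [hgT, coeff_prodPow T n β (Finset.notMem_erase 0 _)]
    split_ifs with hcond
    · obtain ⟨hc1, hc2, hc3⟩ := hcond
      by_cases hodd : ∀ i ∈ T, ((n i).choose (β i)) % 2 = 1
      · exfalso
        have hdia := diamond hm T n (fun i => β i) hodd
          (fun i _ => hβ i) hc1 (by rw [← hc3]; exact hβ 0)
        have hTcard : T.card = s - 1 := by
          rw [hT, Finset.card_erase_of_mem (Finset.mem_univ 0), Finset.card_fin]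
        have hmul : (T.card + 1) * m = s * m := by
          rw [hTcard]
          congr 1
          omega
        have hEm : 2 ^ eVal m ≤ m + 1 := Nat.le_of_dvd (by omega) (two_pow_eVal_dvd m)
        have hsm : m ≤ s * m := Nat.le_mul_of_pos_left m (by omega)
        omega
      · push_neg at hodd
        obtain ⟨i, hiT, hi⟩ := hodd
        apply Finset.prod_eq_zero hiT
        rw [ZMod.natCast_eq_zero_iff]
        omega
    · rfl

lemma natCast_zmod_two_of_odd {c : ℕ} (h : c % 2 = 1) : ((c : ℕ) : ZMod 2) = 1 := by
  have h2 : c = 2 * (c / 2) + 1 := by omega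
  rw [h2]
  push_cast
  rw [show (2 : ZMod 2) = 0 by decide, zero_mul, zero_add]


end ZclAuxSection

/-- For every positive integer `m` there exists an integer `s₀ ≥ 2`
such that for all `s ≥ s₀`, `zcl_s(m) = s·m - (2^{e(m)} - 1)`: the non-increasing
sequence of gaps `G_s(m) = s·m - zcl_s(m)` stabilizes to `G(m) = 2^{e(m)} - 1`. -/
theorem zcl_stabilizes (m : ℕ) (hm : 1 ≤ m) :
    ∃ s₀ : ℕ, 2 ≤ s₀ ∧ ∀ s, s₀ ≤ s → zclVal m s = s * m - (2 ^ eVal m - 1) := by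
  classical
  obtain ⟨c, hc⟩ := m_decomp m
  have hEpos : 0 < 2 ^ eVal m := Nat.pow_pos (by norm_num)
  have hce : 2 ^ eVal m * (c + 1) = 2 ^ eVal m * c + 2 ^ eVal m := by ring
  have hEm : 2 ^ eVal m ≤ m + 1 := Nat.le_of_dvd (by omega) (two_pow_eVal_dvd m)
  refine ⟨max 2 (c + 1), le_max_left _ _, ?_⟩
  intro s hs
  have hs2 : 2 ≤ s := le_trans (le_max_left _ _) hs
  have hsu : c + 1 ≤ s := le_trans (le_max_right _ _) hs
  haveI : NeZero s := ⟨by omega⟩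
  set T : Finset (Fin s) := (Finset.univ : Finset (Fin s)).erase 0 with hT
  have hTcard : T.card = s - 1 := by
    rw [hT, Finset.card_erase_of_mem (Finset.mem_univ 0), Finset.card_fin]
  set n : Fin s → ℕ := fun i => if i = 0 then 0 else if i.val < c + 1 then m + 2 ^ eVal m else m
    with hn
  -- count of special indices
  have hSp : T.filter (fun i => i.val < c + 1)
      = Finset.image (fun j : Fin c => (⟨j.val + 1, by omega⟩ : Fin s)) Finset.univ := by
    ext i
    rw [Finset.mem_filter, Finset.mem_image, hT, Finset.mem_erase]
    constructor
    · rintro ⟨⟨hi0, -⟩, hiv⟩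
      have hv0 : i.val ≠ 0 := fun h => hi0 (Fin.ext (by rw [h, Fin.val_zero]))
      exact ⟨⟨i.val - 1, by omega⟩, Finset.mem_univ _,
        Fin.ext (by show i.val - 1 + 1 = i.val; omega)⟩
    · rintro ⟨j, -, rfl⟩
      refine ⟨⟨?_, Finset.mem_univ _⟩, ?_⟩
      · intro h
        have h2 := congrArg Fin.val h
        rw [Fin.val_zero] at h2
        simp at h2
      · show j.val + 1 < c + 1
        have := j.2
        omega
  have hSpcard : #(T.filter (fun i => i.val < c + 1)) = c := by
    rw [hSp, Finset.card_image_of_injective _ ?_, Finset.card_fin]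
    intro a b hab
    have := congrArg Fin.val hab
    simp at this
    exact Fin.ext this
  have hnT : ∀ i ∈ T, n i = m + (if i.val < c + 1 then 2 ^ eVal m else 0) := by
    intro i hi
    have hi0 : i ≠ 0 := (Finset.mem_erase.mp hi).1
    rw [hn]
    simp only [if_neg hi0]
    split_ifs <;> omega
  have hsumIte : ∑ i ∈ T, (if i.val < c + 1 then 2 ^ eVal m else 0) = c * 2 ^ eVal m := by
    rw [← Finset.sum_filter, Finset.sum_const, hSpcard, smul_eq_mul]
  have hsm : (s - 1) * m + m = s * m := by
    have h1 : s - 1 + 1 = s := by omega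
    calc (s - 1) * m + m = (s - 1 + 1) * m := by ring
    _ = s * m := by rw [h1]
  have hcE : c * 2 ^ eVal m = 2 ^ eVal m * c := by ring
  have hsum1 : ∑ i ∈ T, n i = s * m - (2 ^ eVal m - 1) := by
    rw [Finset.sum_congr rfl hnT, Finset.sum_add_distrib, hsumIte, Finset.sum_const,
      smul_eq_mul, hTcard]
    omega
  have hsum2 : ∑ i ∈ T, (n i - m) = m + 1 - 2 ^ eVal m := by
    have : ∀ i ∈ T, n i - m = (if i.val < c + 1 then 2 ^ eVal m else 0) := by
      intro i hi
      rw [hnT i hi]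
      omega
    rw [Finset.sum_congr rfl this, hsumIte]
    omega
  -- the witness polynomial
  set g : MvPolynomial (Fin s) (ZMod 2) :=
    ∏ i ∈ T, (MvPolynomial.X 0 + MvPolynomial.X i) ^ n i with hg
  set β : Fin s →₀ ℕ := Finsupp.equivFunOnFinite.symm
    (fun i => if i = 0 then m + 1 - 2 ^ eVal m else m) with hβ
  have hβapp : ∀ i, β i = if i = 0 then m + 1 - 2 ^ eVal m else m := fun i => rfl
  have hβlow : ∀ i, β i ≤ m := by
    intro i
    rw [hβapp]
    split_ifs <;> omega
  have hnm : ∀ i ∈ T, m ≤ n i := by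
    intro i hi
    rw [hnT i hi]
    omega
  have hcoeff : MvPolynomial.coeff β g = 1 := by
    rw [hg, coeff_prodPow T n β (Finset.notMem_erase 0 _), if_pos, Finset.prod_eq_one]
    · intro i hi
      have hi0 : i ≠ 0 := (Finset.mem_erase.mp hi).1
      have hβi : β i = m := by rw [hβapp, if_neg hi0]
      rw [hβi, hn]
      simp only [if_neg hi0]
      split_ifs with hic
      · exact natCast_zmod_two_of_odd (odd_lower m hm)
      · rw [Nat.choose_self, Nat.cast_one]
    · refine ⟨?_, ?_, ?_⟩
      · intro i hi
        have hi0 : i ≠ 0 := (Finset.mem_erase.mp hi).1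
        rw [hβapp, if_neg hi0]
        exact hnm i hi
      · intro i hiT hi0
        exfalso
        exact hiT (Finset.mem_erase.mpr ⟨hi0, Finset.mem_univ _⟩)
      · rw [hβapp, if_pos rfl]
        rw [Finset.sum_congr rfl (fun i hi => by
          rw [hβapp i, if_neg (Finset.mem_erase.mp hi).1])]
        rw [hsum2]
  have hgnot : g ∉ projIdeal m s := by
    rw [mem_projIdeal_iff]
    push_neg
    exact ⟨β, hβlow, by rw [hcoeff]; exact one_ne_zero⟩
  have hgne : Ideal.Quotient.mk (projIdeal m s) g ≠ 0 := by
    rw [Ne, Ideal.Quotient.eq_zero_iff_mem]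
    exact hgnot
  -- build the function
  set q : Fin s → ProjRing m s :=
    fun i => Ideal.Quotient.mk (projIdeal m s) (MvPolynomial.X 0 + MvPolynomial.X i) with hq
  have hqker : ∀ i, muHom m s (q i) = 0 := by
    intro i
    rw [hq]
    simp only
    rw [muHom_mk, map_add, MvPolynomial.aeval_X, MvPolynomial.aeval_X,
      CharTwo.add_self_eq_zero, map_zero]
  set L : List (ProjRing m s) :=
    ((List.finRange s).map (fun i => List.replicate (n i) (q i))).flatten with hL
  have hLlen : L.length = s * m - (2 ^ eVal m - 1) := by
    rw [hL, List.length_flatten, List.map_map]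
    have h1 : (List.length ∘ fun i => List.replicate (n i) (q i)) = fun i => n i := by
      funext i
      simp
    rw [h1, ← Fin.sum_univ_def]
    have h2 : ∑ i ∈ T, n i = ∑ i : Fin s, n i :=
      Finset.sum_erase Finset.univ (by rw [hn]; simp)
    rw [← h2, hsum1]
  have hLprod : L.prod = Ideal.Quotient.mk (projIdeal m s) g := by
    rw [hL, List.prod_flatten, List.map_map]
    have h1 : (List.prod ∘ fun i => List.replicate (n i) (q i)) = fun i => q i ^ n i := by
      funext i
      simp [List.prod_replicate]
    rw [h1, ← Fin.prod_univ_def]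
    have h2 : ∏ i ∈ T, q i ^ n i = ∏ i : Fin s, q i ^ n i :=
      Finset.prod_erase Finset.univ (by rw [hn]; simp)
    rw [← h2, hg, map_prod]
    apply Finset.prod_congr rfl
    intro i _
    rw [map_pow]
  set Nstar := s * m - (2 ^ eVal m - 1) with hNstar
  have hlen' : Nstar = L.length := hLlen.symm
  have hmemN : Nstar ∈ {N | ∃ f : Fin N → ProjRing m s,
      (∀ i, muHom m s (f i) = 0) ∧ ∏ i, f i ≠ 0} := by
    have hkerL : ∀ x ∈ L, muHom m s x = 0 := by
      intro x hx
      rw [hL, List.mem_flatten] at hx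
      obtain ⟨l, hl, hxl⟩ := hx
      rw [List.mem_map] at hl
      obtain ⟨i, -, rfl⟩ := hl
      rw [List.eq_of_mem_replicate hxl]
      exact hqker i
    refine ⟨fun j => L.get (Fin.cast hlen' j), ?_, ?_⟩
    · intro j
      exact hkerL _ (L.get_mem _)
    · have hpe : ∏ j : Fin Nstar, L.get (Fin.cast hlen' j) = L.prod := by
        calc ∏ j : Fin Nstar, L.get (Fin.cast hlen' j)
            = ∏ j : Fin L.length, L.get j :=
              Fintype.prod_equiv (finCongr hlen') _ _ (fun j => by rw [finCongr_apply])
          _ = L.prod := by rw [← List.prod_ofFn (f := L.get), List.ofFn_get]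
      rw [hpe, hLprod]
      exact hgne
  have hub : ∀ N' ∈ {N | ∃ f : Fin N → ProjRing m s,
      (∀ i, muHom m s (f i) = 0) ∧ ∏ i, f i ≠ 0}, N' ≤ Nstar := by
    rintro N' ⟨fz, hfker, hfne⟩
    by_contra hlt
    push_neg at hlt
    apply hfne
    have hmem : ∏ i : Fin N', fz i
        ∈ (Ideal.map (Ideal.Quotient.mk (projIdeal m s)) (Jdl m s)) ^ N' := by
      have := prod_mem_pow (Ideal.map (Ideal.Quotient.mk (projIdeal m s)) (Jdl m s))
        Finset.univ fz (fun i _ => ker_muHom_le m s (fz i) (hfker i))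
      rwa [Finset.card_univ, Fintype.card_fin] at this
    have hle2 : (Ideal.map (Ideal.Quotient.mk (projIdeal m s)) (Jdl m s)) ^ N'
        ≤ (Ideal.map (Ideal.Quotient.mk (projIdeal m s)) (Jdl m s)) ^ (Nstar + 1) :=
      Ideal.pow_le_pow_right (by omega)
    have hbot : (Ideal.map (Ideal.Quotient.mk (projIdeal m s)) (Jdl m s)) ^ (Nstar + 1)
        = ⊥ := by
      rw [← Ideal.map_pow]
      apply le_antisymm _ bot_le
      calc Ideal.map (Ideal.Quotient.mk (projIdeal m s)) (Jdl m s ^ (Nstar + 1))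
          ≤ Ideal.map (Ideal.Quotient.mk (projIdeal m s)) (projIdeal m s) :=
            Ideal.map_mono (Jdl_pow_le m s hm (by omega))
        _ = ⊥ := Ideal.map_quotient_self _
    have hfz := hbot ▸ hle2 hmem
    simpa using hfz
  rw [zclVal]
  exact le_antisymm (csSup_le ⟨Nstar, hmemN⟩ hub) (le_csSup ⟨Nstar, hub⟩ hmemN)
end

section
/- Let m ≥ 1, set e = e(m), and let s ≥ 2. For all natural numbers a_2, …, a_s whose sum satisfies a_2 + ⋯ + a_s > s·m - (2^e - 1), the product ∏_{j=2}^{s} (x_1 + x_j)^{a_j} equals 0 in R(m,s). -/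
open Finset

section Aux

lemma mod_two_mul_eq (E k : ℕ) (hE : 0 < E) : k % (2 * E) = 2 * (k / 2 % E) + k % 2 := by
  conv_lhs => rw [← Nat.div_add_mod k 2]
  rw [Nat.add_mod, Nat.mul_mod_mul_left]
  have h2 : k % 2 % (2 * E) = k % 2 := Nat.mod_eq_of_lt (by
    have := Nat.mod_lt k (show 0 < 2 by norm_num); omega)
  rw [h2, Nat.mod_eq_of_lt]
  have := Nat.mod_lt (k / 2) hE
  omega

lemma kummer_mod (e : ℕ) : ∀ k b : ℕ, (k + b).choose k % 2 = 1 →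
    k % 2 ^ e + b % 2 ^ e < 2 ^ e := by
  induction e with
  | zero => intro k b _; simp [Nat.mod_one]
  | succ e ih =>
    intro k b h
    have hp : Fact (Nat.Prime 2) := ⟨Nat.prime_two⟩
    have hl := @Choose.choose_modEq_choose_mod_mul_choose_div_nat (k + b) k 2 hp
    unfold Nat.ModEq at hl
    have hcarry : ¬(k % 2 = 1 ∧ b % 2 = 1) := by
      rintro ⟨hk, hb⟩
      have h0 : (k + b) % 2 = 0 := by omega
      rw [h0, hk] at hl
      simp [Nat.choose] at hl
      omega
    have hnc : k % 2 + b % 2 ≤ 1 := by omega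
    have hmod : (k + b) % 2 = k % 2 + b % 2 := by omega
    have hdiv : (k + b) / 2 = k / 2 + b / 2 := by omega
    have hch : (k % 2 + b % 2).choose (k % 2) = 1 := by
      have h1 : k % 2 = 0 ∨ k % 2 = 1 := by omega
      have h2 : b % 2 = 0 ∨ b % 2 = 1 := by omega
      rcases h1 with h1 | h1 <;> rcases h2 with h2 | h2 <;> simp [h1, h2] <;> omega
    rw [hmod, hdiv, hch, one_mul] at hl
    have h2 : (k / 2 + b / 2).choose (k / 2) % 2 = 1 := by omega
    have hih := ih (k / 2) (b / 2) h2
    have hk2 := mod_two_mul_eq (2 ^ e) k (by positivity)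
    have hb2 := mod_two_mul_eq (2 ^ e) b (by positivity)
    have hpow : (2 : ℕ) ^ (e + 1) = 2 * 2 ^ e := by ring
    rw [hpow, hk2, hb2]
    set x := k / 2 % 2 ^ e
    set y := b / 2 % 2 ^ e
    set E := 2 ^ e
    omega

open MvPolynomial in
lemma coeff_add_pow_ne {σ : Type*} [DecidableEq σ] {i j : σ} (n : ℕ)
    (d : σ →₀ ℕ) (h : MvPolynomial.coeff d ((X i + X j : MvPolynomial σ (ZMod 2)) ^ n) ≠ 0) :
    ∃ k, k ≤ n ∧ n.choose k % 2 = 1 ∧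
      d = Finsupp.single i k + Finsupp.single j (n - k) := by
  rw [add_pow, coeff_sum] at h
  obtain ⟨k, hk, hne⟩ := Finset.exists_ne_zero_of_sum_ne_zero h
  have hcast : (n.choose k : MvPolynomial σ (ZMod 2)) = C ((n.choose k : ZMod 2)) := by simp
  rw [X_pow_eq_monomial, X_pow_eq_monomial, monomial_mul, mul_one, hcast, mul_comm,
    coeff_C_mul, coeff_monomial] at hne
  by_cases hd : Finsupp.single i k + Finsupp.single j (n - k) = d
  · refine ⟨k, Nat.lt_succ_iff.mp (Finset.mem_range.mp hk), ?_, hd.symm⟩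
    rw [if_pos hd, mul_one] at hne
    rw [Ne, ZMod.natCast_eq_zero_iff] at hne
    omega
  · rw [if_neg hd, mul_zero] at hne
    exact absurd rfl hne

open MvPolynomial in
lemma coeff_prod_ne {σ : Type*} [DecidableEq σ] (i0 : σ) (a : σ → ℕ) :
    ∀ t : Finset σ, i0 ∉ t → ∀ d : σ →₀ ℕ,
      MvPolynomial.coeff d (∏ j ∈ t, (X i0 + X j : MvPolynomial σ (ZMod 2)) ^ a j) ≠ 0 →
      ∃ k : σ → ℕ, (∀ j ∈ t, k j ≤ a j ∧ (a j).choose (k j) % 2 = 1) ∧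
        d = ∑ j ∈ t, (Finsupp.single i0 (k j) + Finsupp.single j (a j - k j)) := by
  intro t
  induction t using Finset.induction_on with
  | empty =>
    intro _ d h
    refine ⟨fun _ => 0, by simp, ?_⟩
    rw [Finset.prod_empty] at h
    have hd : d = 0 := by
      by_contra hd
      rw [MvPolynomial.coeff_one, if_neg (by exact fun h0 => hd h0.symm)] at h
      exact h rfl
    simp [hd]
  | @insert j0 t hj0 ih =>
    intro hi0 d h
    have hi0t : i0 ∉ t := fun hmem => hi0 (Finset.mem_insert_of_mem hmem)
    have hij : i0 ≠ j0 := fun he => hi0 (he ▸ Finset.mem_insert_self j0 t)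
    rw [Finset.prod_insert hj0, MvPolynomial.coeff_mul] at h
    obtain ⟨⟨u, v⟩, huv, hne⟩ := Finset.exists_ne_zero_of_sum_ne_zero h
    rw [Finset.HasAntidiagonal.mem_antidiagonal] at huv
    have h1 : MvPolynomial.coeff u ((X i0 + X j0 : MvPolynomial σ (ZMod 2)) ^ a j0) ≠ 0 :=
      fun h0 => hne (by rw [h0, zero_mul])
    have h2 : MvPolynomial.coeff v (∏ j ∈ t, (X i0 + X j : MvPolynomial σ (ZMod 2)) ^ a j) ≠ 0 :=
      fun h0 => hne (by rw [h0, mul_zero])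
    obtain ⟨k0, hk0le, hk0odd, hu⟩ := coeff_add_pow_ne (a j0) u h1
    obtain ⟨k', hk', hv⟩ := ih hi0t v h2
    refine ⟨Function.update k' j0 k0, ?_, ?_⟩
    · intro j hj
      rcases Finset.mem_insert.mp hj with rfl | hjt
      · rw [Function.update_self]; exact ⟨hk0le, hk0odd⟩
      · rw [Function.update_of_ne (by rintro rfl; exact hj0 hjt) _ _]
        exact hk' j hjt
    · rw [Finset.sum_insert hj0, Function.update_self, ← huv, hu, hv]
      congr 1
      refine Finset.sum_congr rfl fun j hj => ?_
      rw [Function.update_of_ne (by rintro rfl; exact hj0 hj) _ _]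

open MvPolynomial in
lemma prod_mem_projIdeal (m s : ℕ) (i0 : Fin s) (a : Fin s → ℕ)
    (ha : s * m - (2 ^ eVal m - 1) < ∑ j ∈ Finset.univ.erase i0, a j) :
    (∏ j ∈ Finset.univ.erase i0, (X i0 + X j : MvPolynomial (Fin s) (ZMod 2)) ^ a j)
      ∈ projIdeal m s := by
  have hspan : projIdeal m s = Ideal.span ((fun n => monomial n (1 : ZMod 2)) ''
      (Set.range fun i : Fin s => Finsupp.single i (m + 1))) := by
    unfold projIdeal
    congr 1
    rw [← Set.range_comp]
    exact congrArg Set.range (funext fun i => X_pow_eq_monomial)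
  rw [hspan, mem_ideal_span_monomial_image]
  intro d hd
  by_contra hcon
  push_neg at hcon
  have hdle : ∀ i : Fin s, d i ≤ m := by
    intro i
    have := hcon (Finsupp.single i (m + 1)) ⟨i, rfl⟩
    rw [Finsupp.single_le_iff] at this
    omega
  have hcoeff := MvPolynomial.mem_support_iff.mp hd
  obtain ⟨k, hk, hdeq⟩ := coeff_prod_ne i0 a (Finset.univ.erase i0)
    (Finset.notMem_erase i0 Finset.univ) d hcoeff
  set t := Finset.univ.erase i0 with ht
  set b : Fin s → ℕ := fun j => a j - k j with hb
  have hab : ∀ j ∈ t, a j = k j + b j := fun j hj => by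
    have := (hk j hj).1; simp only [hb]; omega
  have hd0 : d i0 = ∑ j ∈ t, k j := by
    rw [hdeq, Finset.sum_apply']
    refine Finset.sum_congr rfl fun j hj => ?_
    have hji : j ≠ i0 := Finset.ne_of_mem_erase hj
    simp [Finsupp.single_eq_of_ne' hji]
  have hdj : ∀ j ∈ t, d j = b j := by
    intro j' hj'
    have hj'i : i0 ≠ j' := fun he => Finset.ne_of_mem_erase hj' he.symm
    rw [hdeq, Finset.sum_apply', Finset.sum_eq_single j']
    · simp [Finsupp.single_eq_of_ne' hj'i, hb]
    · intro j hj hne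
      simp [Finsupp.single_eq_of_ne' hne, Finsupp.single_eq_of_ne' hj'i]
    · intro habs; exact absurd hj' habs
  -- arithmetic
  have hEpos : 0 < 2 ^ eVal m := pow_pos (by norm_num) _
  obtain ⟨E', hE'⟩ : ∃ E', 2 ^ eVal m = E' + 1 := ⟨2 ^ eVal m - 1, by omega⟩
  have hdvd : (E' + 1) ∣ m + 1 := hE' ▸ (pow_padicValNat_dvd : 2 ^ eVal m ∣ m + 1)
  obtain ⟨c, hc⟩ := hdvd
  rcases c with _ | c'
  · simp at hc
  have hexp : (E' + 1) * (c' + 1) = (E' + 1) * c' + E' + 1 := by ring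
  have hmE : m = E' + c' * (E' + 1) := by
    have h2 : c' * (E' + 1) = (E' + 1) * c' := by ring
    linarith [hc, hexp]
  have hdivm : m / (E' + 1) = c' := by
    rw [hmE, Nat.add_mul_div_right _ _ (by omega : 0 < E' + 1),
      Nat.div_eq_of_lt (by omega)]
    omega
  have hKle : ∑ j ∈ t, k j ≤ m := by rw [← hd0]; exact hdle i0
  have hble : ∀ j ∈ t, b j ≤ m := fun j hj => by rw [← hdj j hj]; exact hdle j
  have hkum : ∀ j ∈ t, k j % (E' + 1) + b j % (E' + 1) ≤ E' := by
    intro j hj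
    have h1 := (hk j hj).2
    rw [hab j hj] at h1
    have := kummer_mod (eVal m) (k j) (b j) h1
    rw [hE'] at this; omega
  have hDk : ∑ j ∈ t, k j / (E' + 1) ≤ c' := by
    calc ∑ j ∈ t, k j / (E' + 1) ≤ (∑ j ∈ t, k j) / (E' + 1) := by
          rw [Nat.le_div_iff_mul_le (by omega : 0 < E' + 1)]
          calc (∑ j ∈ t, k j / (E' + 1)) * (E' + 1)
              = ∑ j ∈ t, k j / (E' + 1) * (E' + 1) := by rw [Finset.sum_mul]
            _ ≤ ∑ j ∈ t, k j := Finset.sum_le_sum fun j _ => Nat.div_mul_le_self _ _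
      _ ≤ m / (E' + 1) := Nat.div_le_div_right hKle
      _ = c' := hdivm
  have hDb : ∑ j ∈ t, b j / (E' + 1) ≤ t.card * c' := by
    calc ∑ j ∈ t, b j / (E' + 1) ≤ ∑ j ∈ t, c' := Finset.sum_le_sum fun j hj => by
          rw [← hdivm]; exact Nat.div_le_div_right (hble j hj)
      _ = t.card * c' := by rw [Finset.sum_const, smul_eq_mul]
  have hM : ∑ j ∈ t, (k j % (E' + 1) + b j % (E' + 1)) ≤ t.card * E' := by
    calc ∑ j ∈ t, (k j % (E' + 1) + b j % (E' + 1)) ≤ ∑ j ∈ t, E' :=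
          Finset.sum_le_sum hkum
      _ = t.card * E' := by rw [Finset.sum_const, smul_eq_mul]
  have hsplit : ∀ j ∈ t, a j = (E' + 1) * (k j / (E' + 1)) + (E' + 1) * (b j / (E' + 1))
      + (k j % (E' + 1) + b j % (E' + 1)) := by
    intro j hj
    have h1 := Nat.div_add_mod (k j) (E' + 1)
    have h2 := Nat.div_add_mod (b j) (E' + 1)
    have h3 := hab j hj
    linarith
  have hcard : t.card + 1 = s := by
    rw [ht, Finset.card_erase_of_mem (Finset.mem_univ i0), Finset.card_univ,
      Fintype.card_fin]
    have : 0 < s := i0.pos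
    omega
  have htot : ∑ j ∈ t, a j + E' ≤ s * m := by
    calc ∑ j ∈ t, a j + E'
        = ∑ j ∈ t, ((E' + 1) * (k j / (E' + 1)) + (E' + 1) * (b j / (E' + 1))
            + (k j % (E' + 1) + b j % (E' + 1))) + E' :=
          congrArg (· + E') (Finset.sum_congr rfl hsplit)
      _ = (E' + 1) * (∑ j ∈ t, k j / (E' + 1)) + (E' + 1) * (∑ j ∈ t, b j / (E' + 1))
            + (∑ j ∈ t, (k j % (E' + 1) + b j % (E' + 1))) + E' := by
          rw [Finset.mul_sum, Finset.mul_sum, ← Finset.sum_add_distrib,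
            ← Finset.sum_add_distrib]
      _ ≤ (E' + 1) * c' + (E' + 1) * (t.card * c') + t.card * E' + E' := by
          gcongr
      _ = (t.card + 1) * (E' + c' * (E' + 1)) := by ring
      _ = s * m := by rw [hcard, ← hmE]
  rw [hE'] at ha
  omega


end Aux

/-- Let `m ≥ 1`, `e = e(m)`, `s ≥ 2`. For all naturals `a_2, …, a_s`
with `a_2 + ⋯ + a_s > s·m - (2^e - 1)`, the product `∏_{j=2}^s (x_1 + x_j)^{a_j}`
vanishes in `R(m,s)`. -/
theorem prod_zero_divisors_eq_zero (m s : ℕ) (hm : 1 ≤ m) (hs : 2 ≤ s) (a : Fin s → ℕ)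
    (ha : s * m - (2 ^ eVal m - 1) < ∑ j ∈ Finset.univ.erase (⟨0, by omega⟩ : Fin s), a j) :
    (∏ j ∈ Finset.univ.erase (⟨0, by omega⟩ : Fin s),
      (Ideal.Quotient.mk (projIdeal m s)
        (MvPolynomial.X (⟨0, by omega⟩ : Fin s) + MvPolynomial.X j)) ^ a j) = 0 := by
  simp_rw [← map_pow]
  rw [← map_prod, Ideal.Quotient.eq_zero_iff_mem]
  exact prod_mem_projIdeal m s _ a ha
end

section
/- Let m ≥ 1 and write m + 1 = 2^e·q with q odd (so e = e(m)). Let u ≥ 0 be an integer and let i be an integer with i > 2^e·u. Then in the ring (ℤ/2)[x,y]/(y^{m+1}), the element (x+y)^{m+i} is divisible by x^{(u+1)·2^e}. -/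
set_option maxHeartbeats 1000000

open MvPolynomial in
private lemma aux_dvd (m e q : ℕ) (hq1 : 1 ≤ q) (hmeq : m + 1 = 2 ^ e * q) :
    ∀ n u t : ℕ, m + 1 + u * 2 ^ e ≤ n + t * 2 ^ e →
    (Ideal.Quotient.mk
        (Ideal.span {(X 1 : MvPolynomial (Fin 2) (ZMod 2)) ^ (m + 1)}) (X 0)) ^ ((u + 1) * 2 ^ e) ∣
      (Ideal.Quotient.mk
        (Ideal.span {(X 1 : MvPolynomial (Fin 2) (ZMod 2)) ^ (m + 1)}) (X 1)) ^ (t * 2 ^ e) *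
      (Ideal.Quotient.mk
        (Ideal.span {(X 1 : MvPolynomial (Fin 2) (ZMod 2)) ^ (m + 1)}) (X 0 + X 1)) ^ n := by
  set I := Ideal.span {(X 1 : MvPolynomial (Fin 2) (ZMod 2)) ^ (m + 1)} with hI
  set f := Ideal.Quotient.mk I with hf
  have h2e : 1 ≤ 2 ^ e := Nat.one_le_two_pow
  have hb0 : f (X 1) ^ (m + 1) = 0 := by
    rw [← map_pow]
    exact Ideal.Quotient.eq_zero_iff_mem.mpr (Ideal.subset_span rfl)
  have hbk : ∀ k, m + 1 ≤ k → f (X 1) ^ k = 0 := by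
    intro k hk
    rw [← Nat.add_sub_cancel' hk, pow_add, hb0, zero_mul]
  have hfrob : f (X 0 + X 1) ^ 2 ^ e = f (X 0) ^ 2 ^ e + f (X 1) ^ 2 ^ e := by
    rw [← map_pow, ← map_pow, ← map_pow, ← map_add]
    congr 1
    exact add_pow_char_pow (X 0) (X 1) 2 e
  intro n
  induction n using Nat.strong_induction_on with
  | _ n ih =>
    intro u t hcond
    by_cases hn : n < 2 ^ e
    · have hqt : q ≤ t := by
        by_contra h
        push_neg at h
        have h1 : (t + 1) * 2 ^ e ≤ q * 2 ^ e := Nat.mul_le_mul_right _ h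
        have h2 : (t + 1) * 2 ^ e = t * 2 ^ e + 2 ^ e := by ring
        have h3 : q * 2 ^ e = m + 1 := by rw [mul_comm]; exact hmeq.symm
        have h4 : 0 ≤ u * 2 ^ e := Nat.zero_le _
        linarith
      have hz : f (X 1) ^ (t * 2 ^ e) = 0 := by
        apply hbk
        calc m + 1 = 2 ^ e * q := hmeq
          _ ≤ 2 ^ e * t := Nat.mul_le_mul_left _ hqt
          _ = t * 2 ^ e := mul_comm _ _
      rw [hz, zero_mul]
      exact dvd_zero _
    · push_neg at hn
      obtain ⟨n', rfl⟩ := Nat.exists_eq_add_of_le hn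
      have hsplit : f (X 1) ^ (t * 2 ^ e) * f (X 0 + X 1) ^ (2 ^ e + n')
          = f (X 0) ^ 2 ^ e * (f (X 1) ^ (t * 2 ^ e) * f (X 0 + X 1) ^ n')
            + f (X 1) ^ ((t + 1) * 2 ^ e) * f (X 0 + X 1) ^ n' := by
        rw [pow_add, hfrob]
        ring
      rw [hsplit]
      apply dvd_add
      · cases u with
        | zero =>
          simpa using dvd_mul_right (f (X 0) ^ 2 ^ e) (f (X 1) ^ (t * 2 ^ e) * f (X 0 + X 1) ^ n')
        | succ u' =>
          have harith : m + 1 + u' * 2 ^ e ≤ n' + t * 2 ^ e := by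
            have h : (u' + 1) * 2 ^ e = u' * 2 ^ e + 2 ^ e := by ring
            linarith
          have h1 := ih n' (by linarith) u' t harith
          have h2 : (u' + 1 + 1) * 2 ^ e = 2 ^ e + (u' + 1) * 2 ^ e := by ring
          rw [h2, pow_add]
          exact mul_dvd_mul_left _ h1
      · refine ih n' (by linarith) u (t + 1) ?_
        have h : (t + 1) * 2 ^ e = t * 2 ^ e + 2 ^ e := by ring
        linarith

/-- Let `m ≥ 1` and write `m + 1 = 2^e·q` with `q` odd (so
`e = e(m)`). Let `u ≥ 0` and `i > 2^e·u`. Then in `(ℤ/2)[x,y]/(y^{m+1})`, the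
element `(x + y)^{m+i}` is divisible by `x^{(u+1)·2^e}`. -/
theorem x_pow_dvd_add_pow (m e q : ℕ) (hm : 1 ≤ m) (hq : Odd q) (hmeq : m + 1 = 2 ^ e * q)
    (u i : ℕ) (hi : 2 ^ e * u < i) :
    (Ideal.Quotient.mk
        (Ideal.span {(MvPolynomial.X 1 : MvPolynomial (Fin 2) (ZMod 2)) ^ (m + 1)})
        (MvPolynomial.X 0)) ^ ((u + 1) * 2 ^ e) ∣
      (Ideal.Quotient.mk
        (Ideal.span {(MvPolynomial.X 1 : MvPolynomial (Fin 2) (ZMod 2)) ^ (m + 1)})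
        (MvPolynomial.X 0 + MvPolynomial.X 1)) ^ (m + i) := by
  have hcond : m + 1 + u * 2 ^ e ≤ (m + i) + 0 * 2 ^ e := by
    have h : u * 2 ^ e = 2 ^ e * u := mul_comm _ _
    linarith
  have := aux_dvd m e q hq.pos hmeq (m + i) u 0 hcond
  simpa only [zero_mul, pow_zero, one_mul] using this
end

section
/- With m, e, d_ℓ, r_ℓ, t as in the r-recursion: 2^e divides m - (2^e - 1), and 2^e divides d_ℓ for every 0 ≤ ℓ ≤ t; moreover d_0 r_0 + d_1 r_1 + ⋯ + d_t r_t = m - (2^e - 1), i.e. the last step of the recursion is an exact division: r_t = (m - (2^e - 1) - d_0 r_0 - ⋯ - d_{t-1} r_{t-1}) / d_t. -/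
open Finset

lemma aux_choose_parity (e u : ℕ) :
    ((2 ^ e * (u + 1) - 1).choose (2 ^ e)) % 2 = u % 2 := by
  induction e with
  | zero => simp [Nat.choose_one_right]
  | succ e ih =>
    have h2 : 0 < 2 ^ e * (u + 1) := by positivity
    have key := @Choose.choose_modEq_choose_mod_mul_choose_div_nat
      (2 ^ (e + 1) * (u + 1) - 1) (2 ^ (e + 1)) 2 ⟨Nat.prime_two⟩
    have hsplit : 2 ^ (e + 1) * (u + 1) = 2 * (2 ^ e * (u + 1)) := by ring
    have hk2 : 2 ^ (e + 1) = 2 * 2 ^ e := by ring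
    have hn1 : (2 ^ (e + 1) * (u + 1) - 1) % 2 = 1 := by omega
    have hn2 : (2 ^ (e + 1) * (u + 1) - 1) / 2 = 2 ^ e * (u + 1) - 1 := by omega
    have hk1 : 2 ^ (e + 1) % 2 = 0 := by omega
    have hk3 : 2 ^ (e + 1) / 2 = 2 ^ e := by omega
    rw [hn1, hn2, hk1, hk3] at key
    simpa [Nat.ModEq, ih] using key

/-- `2^e` divides `m - (2^e - 1)` and each `d_ℓ` (`0 ≤ ℓ ≤ t`);
moreover `d_0·r_0 + ⋯ + d_t·r_t = m - (2^e - 1)`, i.e. the last step of the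
recursion is an exact division. -/
theorem r_recursion_exact (m : ℕ) (hm : 1 ≤ m) (hpow : ¬ ∃ k, m + 1 = 2 ^ k) :
    2 ^ eVal m ∣ m - (2 ^ eVal m - 1) ∧
    (∀ ℓ ≤ tVal m, 2 ^ eVal m ∣ dVal m ℓ) ∧
    (∑ ℓ ∈ Finset.range (tVal m + 1), dVal m ℓ * rVal m ℓ) = m - (2 ^ eVal m - 1) ∧
    dVal m (tVal m) * rVal m (tVal m) = m - (2 ^ eVal m - 1) - partialS m (tVal m) := by
  have h2e : 1 ≤ 2 ^ eVal m := Nat.one_le_two_pow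
  have hdvd : 2 ^ eVal m ∣ m + 1 := pow_padicValNat_dvd
  set u := (m + 1) / 2 ^ eVal m with hu_def
  have hu : m + 1 = 2 ^ eVal m * u := (Nat.mul_div_cancel' hdvd).symm
  have hupos : 0 < u := by
    rcases Nat.eq_zero_or_pos u with h | h
    · simp [h] at hu
    · exact h
  have huodd : u % 2 = 1 := by
    rcases Nat.even_or_odd u with ⟨v, hv⟩ | h
    · exfalso
      have : 2 ^ (eVal m + 1) ∣ m + 1 := ⟨v, by rw [hu, hv]; ring⟩
      exact pow_succ_padicValNat_not_dvd (by omega) this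
    · exact Nat.odd_iff.mp h
  -- m - (2^e - 1) = (m+1) - 2^e
  have hMeq : m - (2 ^ eVal m - 1) = m + 1 - 2 ^ eVal m := by omega
  have hMdvd : 2 ^ eVal m ∣ m - (2 ^ eVal m - 1) := by
    rw [hMeq]; exact Nat.dvd_sub hdvd dvd_rfl
  -- size facts
  have hsz : m + 1 ≤ 2 ^ Nat.size m := Nat.lt_size_self m
  have hszlt : m + 1 < 2 ^ Nat.size m := by
    rcases lt_or_eq_of_le hsz with h | h
    · exact h
    · exact absurd ⟨Nat.size m, h⟩ hpow
  have hele : 2 ^ eVal m ≤ 2 ^ Nat.size m :=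
    le_trans (Nat.le_of_dvd (by omega) hdvd) hsz
  have hedvd : 2 ^ eVal m ∣ 2 ^ Nat.size m :=
    pow_dvd_pow 2 ((Nat.pow_le_pow_iff_right one_lt_two).mp hele)
  have hd0eq' : d0Val m = 2 ^ Nat.size m - (m + 1) := by
    unfold d0Val; omega
  have hd0dvd : 2 ^ eVal m ∣ d0Val m := by
    rw [hd0eq']; exact Nat.dvd_sub hedvd hdvd
  have hd0pos : 0 < d0Val m := by rw [hd0eq']; omega
  have hddvd : ∀ ℓ, 2 ^ eVal m ∣ dVal m ℓ := fun ℓ =>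
    Nat.dvd_sub hd0dvd (dvd_mul_right _ _)
  -- t + 1 = d0 / 2^e
  have ht1 : tVal m + 1 = d0Val m / 2 ^ eVal m := by
    have h1 : 2 ^ eVal m ≤ d0Val m := Nat.le_of_dvd hd0pos hd0dvd
    have h2 : 1 ≤ d0Val m / 2 ^ eVal m := (Nat.one_le_div_iff (by omega)).mpr h1
    unfold tVal; omega
  have hd0eq : d0Val m = 2 ^ eVal m * (tVal m + 1) := by
    rw [ht1, Nat.mul_div_cancel' hd0dvd]
  have hdt : dVal m (tVal m) = 2 ^ eVal m := by
    unfold dVal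
    rw [hd0eq, Nat.mul_succ, Nat.add_sub_cancel_left]
  -- partial sums facts
  have hSdvd : ∀ n, 2 ^ eVal m ∣ partialS m n := by
    intro n
    induction n with
    | zero => simp [partialS]
    | succ n ih => exact Nat.dvd_add ih (Dvd.dvd.mul_right (hddvd n) _)
  have hSle : ∀ n, partialS m n ≤ m - (2 ^ eVal m - 1) := by
    intro n
    induction n with
    | zero => simp [partialS]
    | succ n ih =>
      show partialS m n + dVal m n * rStep m n (partialS m n) ≤ _
      unfold rStep
      split
      · have := Nat.div_mul_le_self (m - (2 ^ eVal m - 1) - partialS m n) (dVal m n)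
        rw [mul_comm]
        omega
      · simpa using ih
  have hsum : ∀ n, (∑ ℓ ∈ Finset.range n, dVal m ℓ * rVal m ℓ) = partialS m n := by
    intro n
    induction n with
    | zero => simp [partialS]
    | succ n ih => rw [Finset.sum_range_succ, ih]; rfl
  -- oddness of the last binomial coefficient
  have hmu : m + 2 ^ eVal m = 2 ^ eVal m * (u + 1) - 1 := by
    have : 2 ^ eVal m * (u + 1) = 2 ^ eVal m * u + 2 ^ eVal m := by ring
    omega
  have hodd : (m + dVal m (tVal m)).choose (dVal m (tVal m)) % 2 = 1 := by
    rw [hdt, hmu, aux_choose_parity, huodd]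
  -- last step is exact
  have hlast : dVal m (tVal m) * rVal m (tVal m)
      = m - (2 ^ eVal m - 1) - partialS m (tVal m) := by
    have hr : rVal m (tVal m)
        = (m - (2 ^ eVal m - 1) - partialS m (tVal m)) / dVal m (tVal m) := by
      unfold rVal rStep
      rw [if_pos hodd]
    rw [hr, hdt]
    exact Nat.mul_div_cancel' (Nat.dvd_sub hMdvd (hSdvd (tVal m)))
  refine ⟨hMdvd, fun ℓ _ => hddvd ℓ, ?_, hlast⟩
  rw [hsum (tVal m + 1)]
  show partialS m (tVal m) + dVal m (tVal m) * rStep m (tVal m) (partialS m (tVal m)) = _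
  have := hSle (tVal m)
  have h2 := hlast
  unfold rVal at h2
  omega
end
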